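/- arXiv:0712.0981 — 3 statements merged into one kernel-verified Lean document; each statement's English description precedes it below -/
import Mathlib

section
/- Let X ∈ Ω_λ be generic, and for a = 0,…,N−1 let t^{(a)}_1,…,t^{(a)}_{l_a} be the (simple) roots of y_a, the root coordinates of X. Then these numbers satisfy the Bethe ansatz equations: for every a = 1,…,N−1 and every j = 1,…,l_a, Σ_{j'=1}^{l_{a−1}} 1/(t^{(a)}_j − t^{(a−1)}_{j'}) − Σ_{1≤j'≤l_a, j'≠j} 2/(t^{(a)}_j − t^{(a)}_{j'}) + Σ_{j'=1}^{l_{a+1}} 1/(t^{(a)}_j − t^{(a+1)}_{j'}) = 0, where l_N = 0 so the last sum is empty for a = N−1. -/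
open Polynomial

noncomputable section

/-- `d i = λ i + N - i` (0-based indexing: `d i = lam i + (N - 1 - i)`). -/
def degSeq (N : ℕ) (lam : Fin N → ℕ) (i : Fin N) : ℕ :=
  lam i + (N - 1 - (i : ℕ))

/-- The Schubert cell `Ω_λ`. -/
def Omega (N : ℕ) (lam : Fin N → ℕ) : Set (Submodule ℂ (Polynomial ℂ)) :=
  {X | Module.finrank ℂ X = N ∧
    ∀ i : Fin N, ∃ p ∈ X, p.degree = (degSeq N lam i : ℕ)}

/-- `l a = λ_{a+1} + … + λ_N` (0-based: sum of `lam b` over `b ≥ a`); note `l N = 0`. -/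
def lseq (N : ℕ) (lam : Fin N → ℕ) (a : ℕ) : ℕ :=
  ∑ b ∈ Finset.univ.filter (fun b : Fin N => a ≤ (b : ℕ)), lam b

/-- The Wronskian `Wr(g_1, …, g_r)`. -/
noncomputable def wronskian {r : ℕ} (g : Fin r → Polynomial ℂ) : Polynomial ℂ :=
  (Matrix.of fun i j : Fin r =>
    (⇑Polynomial.derivative : Polynomial ℂ → Polynomial ℂ)^[(j : ℕ)] (g i)).det

/-- The Wronskian `Wr(f_{a+1}, …, f_N)` of the tail of a tuple (0-based: tail from index `a`). -/
noncomputable def wrTail {N : ℕ} (f : Fin N → Polynomial ℂ) (a : ℕ) : Polynomial ℂ :=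
  wronskian (fun s : Fin (N - a) => f ⟨a + (s : ℕ), by have := s.isLt; omega⟩)

/-- `f` is a flag basis of `X ∈ Ω_λ`. -/
def IsFlagBasis (N : ℕ) (lam : Fin N → ℕ) (X : Submodule ℂ (Polynomial ℂ))
    (f : Fin N → Polynomial ℂ) : Prop :=
  LinearIndependent ℂ f ∧ Submodule.span ℂ (Set.range f) = X ∧
    ∀ i : Fin N, (f i).Monic ∧ (f i).natDegree = degSeq N lam i ∧
      ∀ j : Fin N, j ≠ i → (f i).coeff (degSeq N lam j) = 0

/-- The Bethe ansatz equations for the tuple `t = (t^{(a)}_j)`, `0 ≤ a ≤ N−1`,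
`1 ≤ j ≤ l a` (with `l N = 0`, so the last sum is empty for `a = N−1`). -/
def BAE (N : ℕ) (lam : Fin N → ℕ) (t : (a : ℕ) → Fin (lseq N lam a) → ℂ) : Prop :=
  ∀ a : ℕ, 1 ≤ a → a < N → ∀ j : Fin (lseq N lam a),
    (∑ j' : Fin (lseq N lam (a - 1)), 1 / (t a j - t (a - 1) j')) -
    (∑ j' ∈ Finset.univ.filter (fun j' : Fin (lseq N lam a) => j' ≠ j), 2 / (t a j - t a j')) +
    (∑ j' : Fin (lseq N lam (a + 1)), 1 / (t a j - t (a + 1) j')) = 0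

/-!
Write `W_a = Wr(f_{a+1}, …, f_N)` and `Z = Wr(f_a, f_{a+2}, …, f_N)`. The Desnanot–Jacobi identity,
applied to the Wronskian matrix of `(f_a, f_{a+1}, …, f_N)` with rows `f_a, f_{a+1}` and the
columns of the two highest derivatives, gives `W_{a-1} W_{a+1} = Z W_a' - Z' W_a`.
Differentiating, `(W_{a-1} W_{a+1})' = Z W_a'' - Z'' W_a`, so at a root `t` of `y_a` both
`W_{a-1} W_{a+1}` and its derivative are multiples of `Z(t)`, and
`y_a''(t) / y_a'(t) = (y_{a-1} y_{a+1})'(t) / (y_{a-1} y_{a+1})(t)`. For polynomials with simple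
roots the left side is `2 ∑_{j' ≠ j} 1 / (t - t_{j'})` and the right side is the sum of
`1 / (t - s)` over the roots `s` of `y_{a-1}` and `y_{a+1}`: these are the Bethe equations.
-/

namespace Matrix

variable {R : Type*} [CommRing R] {n : ℕ}

theorem det_updateCol_single_one (A : Matrix (Fin (n + 1)) (Fin (n + 1)) R) (i j : Fin (n + 1)) :
    (A.updateCol j (Pi.single i 1)).det =
      (-1) ^ (i + j : ℕ) * (A.submatrix i.succAbove j.succAbove).det := by
  rw [← det_transpose, ← updateRow_transpose, ← adjugate_apply, adjugate_fin_succ_eq_det_submatrix,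
    ← det_transpose, transpose_submatrix, transpose_transpose, add_comm]

theorem det_one_updateCol_updateCol_last_two (v w : Fin (n + 2) → R) :
    (((1 : Matrix (Fin (n + 2)) (Fin (n + 2)) R).updateCol (Fin.last n).castSucc v).updateCol
        (Fin.last (n + 1)) w).det =
      v (Fin.last n).castSucc * w (Fin.last (n + 1)) -
        v (Fin.last (n + 1)) * w (Fin.last n).castSucc := by
  induction n with
  | zero =>
    rw [det_fin_two]
    simp
    ring
  | succ n ih =>
    have hp : (Fin.last (n + 1)).castSucc = (Fin.last n).castSucc.succ := by
      rw [Fin.succ_castSucc, Fin.succ_last]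
    have hsub : (((1 : Matrix (Fin (n + 3)) (Fin (n + 3)) R).updateCol (Fin.last (n + 1)).castSucc
        v).updateCol (Fin.last (n + 2)) w).submatrix Fin.succ Fin.succ =
        ((1 : Matrix (Fin (n + 2)) (Fin (n + 2)) R).updateCol (Fin.last n).castSucc
          (v ∘ Fin.succ)).updateCol (Fin.last (n + 1)) (w ∘ Fin.succ) := by
      ext i j
      simp [updateCol_apply, one_apply, hp]
    rw [det_succ_column_zero, Fin.sum_univ_succ, Fin.succAbove_zero, hsub, ih]
    simp [hp, (Fin.succ_ne_zero _).symm]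

theorem det_updateCol_updateCol_last_two_single (M : Matrix (Fin (n + 2)) (Fin (n + 2)) R) :
    ((M.updateCol (Fin.last n).castSucc (Pi.single 0 1)).updateCol (Fin.last (n + 1))
        (Pi.single 1 1)).det =
      (M.submatrix (Fin.succ ∘ Fin.succ) (Fin.castSucc ∘ Fin.castSucc)).det := by
  have hsub : (M.updateCol (Fin.last n).castSucc (Pi.single 0 1)).submatrix (Fin.succAbove 1)
      Fin.castSucc = (M.submatrix (Fin.succAbove 1) Fin.castSucc).updateCol (Fin.last n)
        (Pi.single 0 1) := by
    ext i j
    refine Fin.cases ?_ (fun i => ?_) i <;> simp [updateCol_apply]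
  have hrows : Fin.succAbove 1 ∘ Fin.succAbove 0 = (Fin.succ ∘ Fin.succ : Fin n → Fin (n + 2)) :=
    funext fun i => by simp
  rw [det_updateCol_single_one, Fin.succAbove_last, hsub, det_updateCol_single_one,
    Fin.succAbove_last, submatrix_submatrix, hrows, ← mul_assoc, ← pow_add]
  have : Even ((1 : Fin (n + 2)) + (Fin.last (n + 1) : ℕ) +
      ((0 : Fin (n + 1)) + (Fin.last n : ℕ))) := ⟨n + 1, by simp; omega⟩
  rw [this.neg_one_pow, one_mul]

theorem desnanot_jacobi_of_det_ne_zero [IsDomain R] (M : Matrix (Fin (n + 2)) (Fin (n + 2)) R)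
    (hM : M.det ≠ 0) :
    M.det * (M.submatrix (Fin.succ ∘ Fin.succ) (Fin.castSucc ∘ Fin.castSucc)).det =
      (M.submatrix Fin.succ (Fin.last n).castSucc.succAbove).det *
          (M.submatrix (Fin.succAbove 1) Fin.castSucc).det -
        (M.submatrix Fin.succ Fin.castSucc).det *
          (M.submatrix (Fin.succAbove 1) (Fin.last n).castSucc.succAbove).det := by
  set p := (Fin.last n).castSucc
  set q := Fin.last (n + 1)
  have hpq : p ≠ q := Fin.castSucc_lt_last _ |>.ne
  -- `C` is the identity with columns `p, q` replaced by the columns `0, 1` of the adjugate, so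
  -- `M * C` is `M` with columns `p, q` replaced by `det M • e₀, det M • e₁`.
  set C := ((1 : Matrix (Fin (n + 2)) (Fin (n + 2)) R).updateCol p
    (fun k => M.adjugate k 0)).updateCol q (fun k => M.adjugate k 1)
  have hMC : M * C =
      (M.updateCol p (M.det • Pi.single 0 1)).updateCol q (M.det • Pi.single 1 1) := by
    have hcol : ∀ i, M *ᵥ (fun k => M.adjugate k i) = M.det • Pi.single i 1 := fun i => by
      ext k
      have := congrFun (congrFun (mul_adjugate M) k) i
      simp only [mul_apply, one_apply, smul_apply, smul_eq_mul] at this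
      simp only [mulVec, dotProduct, this, Pi.smul_apply, Pi.single_apply, smul_eq_mul]
    simp only [C, mul_updateCol, mul_one, hcol]
  have hdet := congrArg det hMC
  rw [det_mul, det_one_updateCol_updateCol_last_two, det_updateCol_smul, updateCol_comm _ hpq,
    det_updateCol_smul, updateCol_comm _ hpq.symm, det_updateCol_updateCol_last_two_single] at hdet
  simp only [adjugate_fin_succ_eq_det_submatrix] at hdet
  refine mul_left_cancel₀ hM (hdet.symm.trans ?_)
  simp only [Fin.val_zero, Fin.val_one, Fin.val_last, Fin.val_castSucc, Fin.succAbove_zero,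
    Fin.succAbove_last]
  ring_nf
  rw [(show Even (n * 2) from ⟨n, by ring⟩).neg_one_pow]
  ring

/-- The Desnanot–Jacobi identity for the rows `0, 1` and the last two columns. -/
theorem desnanot_jacobi (M : Matrix (Fin (n + 2)) (Fin (n + 2)) R) :
    M.det * (M.submatrix (Fin.succ ∘ Fin.succ) (Fin.castSucc ∘ Fin.castSucc)).det =
      (M.submatrix Fin.succ (Fin.last n).castSucc.succAbove).det *
          (M.submatrix (Fin.succAbove 1) Fin.castSucc).det -
        (M.submatrix Fin.succ Fin.castSucc).det *
          (M.submatrix (Fin.succAbove 1) (Fin.last n).castSucc.succAbove).det := by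
  -- Specialize the identity for the generic matrix, whose determinant is nonzero.
  have := congrArg (MvPolynomial.aeval fun p : Fin (n + 2) × Fin (n + 2) => M p.1 p.2)
    (desnanot_jacobi_of_det_ne_zero _ (det_mvPolynomialX_ne_zero (Fin (n + 2)) ℤ))
  simp only [map_sub, map_mul, AlgHom.map_det, AlgHom.mapMatrix_apply, ← submatrix_map] at this
  rwa [← AlgHom.mapMatrix_apply, mvPolynomialX_mapMatrix_aeval] at this

end Matrix

theorem Polynomial.derivative_det {R ι : Type*} [CommRing R] [Fintype ι] [DecidableEq ι]
    (M : Matrix ι ι R[X]) :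
    derivative M.det = ∑ j, (M.updateCol j fun i => derivative (M i j)).det := by
  simp only [Matrix.det_apply', derivative_sum, derivative_intCast_mul, derivative_prod_finset,
    Finset.mul_sum]
  rw [Finset.sum_comm]
  refine Finset.sum_congr rfl fun j _ => Finset.sum_congr rfl fun σ _ => ?_
  rw [← Finset.mul_prod_erase _ _ (Finset.mem_univ j), Matrix.updateCol_self,
    mul_comm (∏ _ ∈ _, _),
    Finset.prod_congr rfl fun i hi => Matrix.updateCol_ne (Finset.ne_of_mem_erase hi)]

/-- `(Fin.last m).castSucc.succAbove` lists the derivative orders `0, …, m - 1, m + 1`. -/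
theorem derivative_wronskian {m : ℕ} (g : Fin (m + 1) → ℂ[X]) :
    derivative (wronskian g) = (Matrix.of fun i j : Fin (m + 1) =>
      derivative^[((Fin.last m).castSucc.succAbove j : ℕ)] (g i)).det := by
  unfold _root_.wronskian
  rw [derivative_det, Finset.sum_eq_single (Fin.last m)]
  · refine congrArg Matrix.det (Matrix.ext fun i j => ?_)
    rcases eq_or_ne j (Fin.last m) with rfl | hj
    · simp [Function.iterate_succ_apply']
    · have : (Fin.last m).castSucc.succAbove j = j.castSucc :=
        Fin.succAbove_of_castSucc_lt _ _
          (Fin.castSucc_lt_castSucc_iff.2 (Fin.lt_last_iff_ne_last.2 hj))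
      simp [Matrix.updateCol_ne hj, this]
  · intro j _ hj
    have hjm : (j : ℕ) + 1 < m + 1 := by have := Fin.val_lt_last hj; omega
    refine Matrix.det_zero_of_column_eq (i := j) (j := ⟨j + 1, hjm⟩) (by simp [Fin.ext_iff])
      fun k => ?_
    simp [Fin.ext_iff, Function.iterate_succ_apply']
  · simp

theorem wronskian_cons_cons {m : ℕ} (u v : ℂ[X]) (A : Fin m → ℂ[X]) :
    wronskian (Fin.cons u (Fin.cons v A)) * wronskian A =
      Polynomial.wronskian (wronskian (Fin.cons u A)) (wronskian (Fin.cons v A)) := by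
  set g : Fin (m + 2) → ℂ[X] := Fin.cons u (Fin.cons v A)
  have hg : g ∘ Fin.succAbove 1 = Fin.cons u A :=
    funext fun i => Fin.cases rfl (fun i => by simp [g]) i
  set W : Matrix (Fin (m + 2)) (Fin (m + 2)) ℂ[X] := Matrix.of fun i j => derivative^[(j : ℕ)] (g i)
  have h := W.desnanot_jacobi
  have hA : (W.submatrix (Fin.succ ∘ Fin.succ) (Fin.castSucc ∘ Fin.castSucc)).det =
    wronskian A := rfl
  have hv : (W.submatrix Fin.succ Fin.castSucc).det = wronskian (Fin.cons v A) := rfl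
  have hv' : (W.submatrix Fin.succ (Fin.last m).castSucc.succAbove).det =
    derivative (wronskian (Fin.cons v A)) := (derivative_wronskian _).symm
  have hu : (W.submatrix (Fin.succAbove 1) Fin.castSucc).det = wronskian (Fin.cons u A) := by
    rw [← hg]; rfl
  have hu' : (W.submatrix (Fin.succAbove 1) (Fin.last m).castSucc.succAbove).det =
      derivative (wronskian (Fin.cons u A)) := by
    rw [derivative_wronskian, ← hg]; rfl
  rw [hA, hv, hv', hu, hu'] at h
  exact h.trans (by rw [Polynomial.wronskian]; ring)

theorem wrTail_eq_wronskian {N b r : ℕ} (f : Fin N → ℂ[X]) (g : Fin r → ℂ[X]) (hr : b + r = N)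
    (hg : ∀ s : Fin r, g s = f ⟨b + s, by omega⟩) : wrTail f b = wronskian g := by
  obtain rfl : r = N - b := by omega
  exact congrArg _root_.wronskian (funext fun s => (hg s).symm)

theorem exists_wrTail_mul_wrTail_eq_wronskian {N a : ℕ} (f : Fin N → ℂ[X]) (ha : 1 ≤ a)
    (haN : a < N) :
    ∃ Z, wrTail f (a - 1) * wrTail f (a + 1) = Polynomial.wronskian Z (wrTail f a) := by
  set A : Fin (N - (a + 1)) → ℂ[X] := fun s => f ⟨a + 1 + s, by omega⟩
  refine ⟨wronskian (Fin.cons (f ⟨a - 1, by omega⟩) A), ?_⟩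
  rw [wrTail_eq_wronskian f (Fin.cons (f ⟨a - 1, by omega⟩) (Fin.cons (f ⟨a, haN⟩) A)) (by omega),
    wrTail_eq_wronskian f A (by omega) fun _ => rfl,
    wrTail_eq_wronskian f (Fin.cons (f ⟨a, haN⟩) A) (by omega), wronskian_cons_cons]
  · refine Fin.cases (by simp) fun s => ?_
    simp only [Fin.cons_succ, A]
    congr 1
    ext
    simp
    omega
  · refine Fin.cases ?_ (Fin.cases ?_ fun s => ?_) <;>
      simp only [Fin.cons_zero, Fin.cons_succ, A] <;> congr 1 <;> ext <;> simp <;> omega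

theorem lseq_eq_zero_of_le {N b : ℕ} (lam : Fin N → ℕ) (hb : N ≤ b) : lseq N lam b = 0 :=
  Finset.sum_eq_zero fun c hc => absurd (Finset.mem_filter.1 hc).2 (by omega)

theorem wrTail_eq_C_mul_prod_X_sub_C {N : ℕ} {lam : Fin N → ℕ} {f : Fin N → ℂ[X]}
    {y : ℕ → ℂ[X]} {t : (a : ℕ) → Fin (lseq N lam a) → ℂ}
    (hy : ∀ a < N, ∃ c : ℂ, c ≠ 0 ∧ wrTail f a = C c * y a)
    (ht : ∀ a < N, y a = ∏ j : Fin (lseq N lam a), (X - C (t a j))) {b : ℕ} (hb : b ≤ N) :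
    ∃ c : ℂ, c ≠ 0 ∧ wrTail f b = C c * ∏ j : Fin (lseq N lam b), (X - C (t b j)) := by
  rcases hb.lt_or_eq with hb | rfl
  · obtain ⟨c, hc, hw⟩ := hy b hb
    exact ⟨c, hc, by rw [hw, ht b hb]⟩
  · have : IsEmpty (Fin (lseq b lam b)) := by rw [lseq_eq_zero_of_le lam le_rfl]; infer_instance
    refine ⟨1, one_ne_zero, ?_⟩
    rw [wrTail_eq_wronskian f Fin.elim0 (by omega) fun s => s.elim0]
    simp [_root_.wronskian]

section Roots

variable {K : Type*} [Field K]

theorem eval_derivative_wronskian_mul_eval_derivative {R : Type*} [CommRing R] (Z p : R[X])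
    {t : R} (ht : p.eval t = 0) :
    (derivative (Polynomial.wronskian Z p)).eval t * (derivative p).eval t =
      (derivative (derivative p)).eval t * (Polynomial.wronskian Z p).eval t := by
  simp only [Polynomial.wronskian, derivative_sub, derivative_mul, eval_sub, eval_add, eval_mul, ht]
  ring

theorem eval_derivative_prod_X_sub_C {ι : Type*} (s : Finset ι) (u : ι → K) {t : K}
    (h : ∀ i ∈ s, t ≠ u i) :
    (derivative (∏ i ∈ s, (X - C (u i)))).eval t =
      (∏ i ∈ s, (X - C (u i))).eval t * ∑ i ∈ s, (t - u i)⁻¹ := by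
  classical
  rw [derivative_prod_finset, eval_finsetSum, Finset.mul_sum]
  refine Finset.sum_congr rfl fun i hi => ?_
  rw [← Finset.mul_prod_erase s _ hi]
  simp only [derivative_X_sub_C, mul_one, eval_mul, eval_sub, eval_X, eval_C]
  field_simp [sub_ne_zero.2 (h i hi)]

theorem sum_inv_sub_eq_two_mul_sum_inv_sub_of_eq_wronskian {ι κ : Type*} [Fintype ι]
    [DecidableEq ι] [Fintype κ] {u : ι → K} (hu : Function.Injective u) {w : κ → K} (i : ι)
    (huw : ∀ k, u i ≠ w k) {α : K} (hα : α ≠ 0) {Z : K[X]}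
    (h : C α * ∏ k, (X - C (w k)) = Polynomial.wronskian Z (∏ i, (X - C (u i)))) :
    ∑ k, (u i - w k)⁻¹ = 2 * ∑ i' ∈ Finset.univ.erase i, (u i - u i')⁻¹ := by
  have hq' := eval_derivative_prod_X_sub_C (Finset.univ.erase i) u (t := u i)
    fun i' hi' => hu.ne (Finset.ne_of_mem_erase hi').symm
  have hg' := eval_derivative_prod_X_sub_C Finset.univ w (t := u i) fun k _ => huw k
  set g := ∏ k, (X - C (w k))
  set q := ∏ i' ∈ Finset.univ.erase i, (X - C (u i'))
  have hp : ∏ i, (X - C (u i)) = (X - C (u i)) * q :=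
    (Finset.mul_prod_erase _ _ (Finset.mem_univ i)).symm
  have hq : q.eval (u i) ≠ 0 := by
    simp only [q, eval_prod, eval_sub, eval_X, eval_C]
    exact Finset.prod_ne_zero_iff.2 fun i' hi' =>
      sub_ne_zero.2 (hu.ne (Finset.ne_of_mem_erase hi').symm)
  have hg : g.eval (u i) ≠ 0 := by
    simp only [g, eval_prod, eval_sub, eval_X, eval_C]
    exact Finset.prod_ne_zero_iff.2 fun k _ => sub_ne_zero.2 (huw k)
  have key := eval_derivative_wronskian_mul_eval_derivative Z (∏ i, (X - C (u i))) (t := u i)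
    (by simp [hp])
  rw [← h, hp] at key
  simp only [derivative_mul, derivative_add, derivative_C, derivative_X_sub_C, zero_mul, zero_add,
    one_mul, eval_add, eval_mul, eval_C, eval_sub, eval_X, sub_self, zero_mul, add_zero] at key
  refine mul_left_cancel₀ (mul_ne_zero (mul_ne_zero hα hg) hq) ?_
  linear_combination key - α * q.eval (u i) * hg' + 2 * α * g.eval (u i) * hq'

end Roots

theorem statement5_general (N : ℕ) (lam : Fin N → ℕ)
    (f : Fin N → Polynomial ℂ)
    (y : ℕ → Polynomial ℂ)
    (hy : ∀ a < N, (y a).Monic ∧ ∃ c : ℂ, c ≠ 0 ∧ wrTail f a = Polynomial.C c * y a)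
    (t : (a : ℕ) → Fin (lseq N lam a) → ℂ)
    (ht : ∀ a < N, y a = ∏ j : Fin (lseq N lam a), (Polynomial.X - Polynomial.C (t a j)))
    (hsimple : ∀ a < N, Function.Injective (t a))
    (hdisj : ∀ a : ℕ, 1 ≤ a → a < N →
      ∀ (j : Fin (lseq N lam a)) (j' : Fin (lseq N lam (a - 1))), t a j ≠ t (a - 1) j') :
    BAE N lam t := by
  intro a ha haN j
  obtain ⟨Z, hZ⟩ := exists_wrTail_mul_wrTail_eq_wronskian f ha haN
  have hW := fun b => wrTail_eq_C_mul_prod_X_sub_C (fun a ha => (hy a ha).2) ht (b := b)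
  obtain ⟨cm, hcm, hm⟩ := hW (a - 1) (by omega)
  obtain ⟨c, hc, h0⟩ := hW a haN.le
  obtain ⟨cp, hcp, hp⟩ := hW (a + 1) haN
  have hroots : ∀ k, t a j ≠ Sum.elim (t (a - 1)) (t (a + 1)) k := by
    rintro (k | k)
    · exact hdisj a ha haN j k
    · rcases (Nat.succ_le_of_lt haN).lt_or_eq with h | h
      · exact (hdisj (a + 1) (by omega) h k j).symm
      · exact absurd k.isLt (by simp [lseq_eq_zero_of_le lam h.ge])
  have hrel : C (cm * cp) * ∏ k, (X - C (Sum.elim (t (a - 1)) (t (a + 1)) k)) =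
      Polynomial.wronskian (C c * Z) (∏ j, (X - C (t a j))) := by
    rw [hm, h0, hp, Polynomial.wronskian, derivative_C_mul] at hZ
    rw [Fintype.prod_sum_type, Polynomial.wronskian, derivative_C_mul]
    simp only [Sum.elim_inl, Sum.elim_inr, map_mul]
    linear_combination hZ
  have hbethe := sum_inv_sub_eq_two_mul_sum_inv_sub_of_eq_wronskian (hsimple a haN) j hroots
    (mul_ne_zero hcm hcp) hrel
  rw [Fintype.sum_sum_type] at hbethe
  simp only [Sum.elim_inl, Sum.elim_inr] at hbethe
  simp only [div_eq_mul_inv, ← Finset.mul_sum, Finset.filter_ne']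
  linear_combination hbethe

/-- the root coordinates of a generic `X ∈ Ω_λ` satisfy the Bethe
ansatz equations. Here `y a` is the monic polynomial proportional to
`Wr(f_{a+1},…,f_N)` (with `f` the flag basis of `X`), `t a` are its roots
(simple, by genericity), and consecutive `y`'s have no common roots. -/
theorem statement5 (N : ℕ) (hN : 1 ≤ N) (lam : Fin N → ℕ) (hlam : Antitone lam)
    (X : Submodule ℂ (Polynomial ℂ)) (hX : X ∈ Omega N lam)
    (f : Fin N → Polynomial ℂ) (hf : IsFlagBasis N lam X f)
    (y : ℕ → Polynomial ℂ)
    (hy : ∀ a < N, (y a).Monic ∧ ∃ c : ℂ, c ≠ 0 ∧ wrTail f a = Polynomial.C c * y a)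
    (t : (a : ℕ) → Fin (lseq N lam a) → ℂ)
    (ht : ∀ a < N, y a = ∏ j : Fin (lseq N lam a), (Polynomial.X - Polynomial.C (t a j)))
    (hsimple : ∀ a < N, Function.Injective (t a))
    (hdisj : ∀ a : ℕ, 1 ≤ a → a < N →
      ∀ (j : Fin (lseq N lam a)) (j' : Fin (lseq N lam (a - 1))), t a j ≠ t (a - 1) j') :
    BAE N lam t :=
  statement5_general N lam f y hy t ht hsimple hdisj
end
end

section
/- Let t = (t^{(a)}_j), a = 0,…,N−1, j = 1,…,l_a, be complex numbers such that within each level a the numbers t^{(a)}_1,…,t^{(a)}_{l_a} are pairwise distinct, for each a = 1,…,N−1 the sets {t^{(a−1)}_{j'}} and {t^{(a)}_j} are disjoint, and t satisfies the Bethe ansatz equations (these conditions hold precisely when t are the root coordinates of a generic X ∈ Ω_λ). Then the value ω(t) of the universal weight function is a singular vector of weight λ in (ℂ^N)^{⊗n}: e_{ab}·ω(t) = 0 for all 1 ≤ a < b ≤ N, and e_{aa}·ω(t) = λ_a·ω(t) for all a = 1,…,N. -/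
open Polynomial

noncomputable section

/-- A sequence `J : Fin n → Fin N` (0-based values: `J s = j_s − 1`) is `l`-admissible:
`#{s | j_s > i} = l i` for `i = 1, …, N−1`. -/
def IsAdmissible (N : ℕ) (lam : Fin N → ℕ) (J : Fin (lseq N lam 0) → Fin N) : Prop :=
  ∀ i ∈ Finset.Ico 1 N, (Finset.univ.filter fun s => i ≤ ((J s : ℕ))).card = lseq N lam i

instance (N : ℕ) (lam : Fin N → ℕ) (J : Fin (lseq N lam 0) → Fin N) :
    Decidable (IsAdmissible N lam J) := by
  unfold IsAdmissible; infer_instance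

/-- The set `B(J)` of tuples `β = (β_1, …, β_{N−1})` of bijections
`β_i : S_i(J) → {1, …, l i}`, where `S_i(J) = {s | j_s > i}`; here `k : Fin (N−1)`
encodes the level `i = k + 1`. -/
def BType (N : ℕ) (lam : Fin N → ℕ) (J : Fin (lseq N lam 0) → Fin N) : Type :=
  ∀ k : Fin (N - 1),
    {s : Fin (lseq N lam 0) // (k : ℕ) + 1 ≤ (J s : ℕ)} ≃ Fin (lseq N lam ((k : ℕ) + 1))

instance (N : ℕ) (lam : Fin N → ℕ) (J : Fin (lseq N lam 0) → Fin N) :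
    Fintype (BType N lam J) := by
  unfold BType; infer_instance

/-- `β_i(s)` (0-based), with the convention `β_0(s) = s`; junk value `0` outside
the meaningful range. -/
def bcoord (N : ℕ) (lam : Fin N → ℕ) (J : Fin (lseq N lam 0) → Fin N)
    (β : BType N lam J) (i : ℕ) (s : Fin (lseq N lam 0)) : ℕ :=
  if hi : i = 0 then (s : ℕ)
  else if h : i - 1 < N - 1 ∧ i ≤ (J s : ℕ) then (β ⟨i - 1, h.1⟩ ⟨s, by show i - 1 + 1 ≤ (J s : ℕ); omega⟩ : ℕ)
  else 0

/-- `t^{(a)}_j` accessed by a 0-based natural index `j`, with junk value `0` out of range. -/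
def tcoord (N : ℕ) (lam : Fin N → ℕ) (t : (a : ℕ) → Fin (lseq N lam a) → ℂ)
    (a j : ℕ) : ℂ :=
  if h : j < lseq N lam a then t a ⟨j, h⟩ else 0

/-- The universal weight function `ω(t) ∈ (ℂ^N)^{⊗n}`, the tensor power being modeled
as the space of functions `(Fin n → Fin N) → ℂ` on the standard basis indices; the
coefficient of `e_{j_1} ⊗ … ⊗ e_{j_n}` is
`ω_J(t) = ∑_{β ∈ B(J)} ∏_{s ∈ S(J)} ω_{s,β}(t)` for admissible `J` and `0` otherwise,
where `ω_{s,β}(t) = ∏_{i=1}^{j_s − 1} (t^{(i)}_{β_i(s)} − t^{(i−1)}_{β_{i−1}(s)})⁻¹`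
(the product over all `s` coincides with that over `s ∈ S(J)`, the extra factors
being empty products). -/
def weightFun (N : ℕ) (lam : Fin N → ℕ) (t : (a : ℕ) → Fin (lseq N lam a) → ℂ) :
    (Fin (lseq N lam 0) → Fin N) → ℂ :=
  fun J =>
    if IsAdmissible N lam J then
      ∑ β : BType N lam J, ∏ s : Fin (lseq N lam 0),
        ∏ i ∈ Finset.Icc 1 ((J s : ℕ)),
          (tcoord N lam t i (bcoord N lam J β i s) -
            tcoord N lam t (i - 1) (bcoord N lam J β (i - 1) s))⁻¹
    else 0

/-- The action of the matrix unit `e_{ab} ∈ gl_N` on `(ℂ^N)^{⊗n}`, modeled on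
coefficient functions: `(e_{ab}·v)(J) = ∑_{s : J s = a} v(J[s ↦ b])`. -/
def glAct (N n : ℕ) (a b : Fin N) (v : (Fin n → Fin N) → ℂ) : (Fin n → Fin N) → ℂ :=
  fun J => ∑ s : Fin n, if J s = a then v (Function.update J s b) else 0


/-!
For a simple root, `(e_{a,a+1}·ω)(J)` sums `ω` over the sequences obtained from `J` by raising
one entry equal to `a` to `a + 1`. Splitting a tuple of bijections into its component at level
`a + 1` and the others, the level-`a + 1` variables `x_m = t^{(a+1)}_m` only occur in one factor
`F_r(x)` per position `r`, and the sum over the level-`a + 1` bijections is a permanent of the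
matrix `F_r(x_m)`. Expanding that permanent along a row and along a column and substituting the
Bethe equation at `x_m` turns the sum into one over ordered pairs `m ≠ m'` whose summand is
antisymmetric under `m ↔ m'`, because the Bethe equation involves `-F_r'/F_r`; so it vanishes.
The other raising operators follow from `e_{ab} = [e_{ac}, e_{cb}]`, and the weight is `λ`
because an admissible `J` takes the value `a` exactly `λ_a` times.
-/

def Finset.subtypeNeEquivErase {κ : Type*} [DecidableEq κ] (M : Finset κ) (m : M) :
    {z : M // z ≠ m} ≃ M.erase m where
  toFun z := ⟨z.1, Finset.mem_erase.2 ⟨fun h => z.2 (Subtype.ext h), z.1.2⟩⟩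
  invFun z := ⟨⟨z, Finset.mem_of_mem_erase z.2⟩,
    fun h => Finset.ne_of_mem_erase z.2 (congrArg Subtype.val h)⟩
  left_inv _ := rfl
  right_inv _ := rfl

theorem Finset.sum_sum_erase_eq_zero_of_antisymm {κ M : Type*} [DecidableEq κ] [AddCommMonoid M]
    (s : Finset κ) (f : κ → κ → M) (hf : ∀ m ∈ s, ∀ m' ∈ s, m ≠ m' → f m m' + f m' m = 0) :
    ∑ m ∈ s, ∑ m' ∈ s.erase m, f m m' = 0 := by
  rw [← Finset.sum_finset_product' s.offDiag _ _ fun p => by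
    simp only [Finset.mem_offDiag, Finset.mem_erase]; tauto]
  refine Finset.sum_involution (fun p _ => p.swap) (fun p hp => ?_) (fun p hp _ => ?_)
    (fun p hp => ?_) (fun p _ => p.swap_swap)
  · obtain ⟨h1, h2, h12⟩ := Finset.mem_offDiag.1 hp
    exact hf _ h1 _ h2 h12
  · obtain ⟨-, -, h12⟩ := Finset.mem_offDiag.1 hp
    exact fun h => h12 (congrArg Prod.snd h)
  · simp only [Finset.mem_offDiag, Prod.fst_swap, Prod.snd_swap] at hp ⊢
    tauto

section Permanent

variable {ι κ R : Type*} [DecidableEq ι] [DecidableEq κ]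

/-- The permanent of the `S × M` block of `F`; it vanishes unless `#S = #M`. -/
def permanentOn [CommSemiring R] (S : Finset ι) (M : Finset κ) (F : ι → κ → R) : R :=
  ∑ γ : S ≃ M, ∏ y : S, F y (γ y)

section CommSemiring

variable [CommSemiring R]

theorem permanentOn_insert {S : Finset ι} {s : ι} (hs : s ∉ S) (M : Finset κ) (F : ι → κ → R) :
    permanentOn (insert s S) M F = ∑ m ∈ M, F s m * permanentOn S (M.erase m) F := by
  set e := Finset.subtypeInsertEquivOption hs
  have hprod : ∀ γ : Option S ≃ M, ∏ y : (insert s S : Finset ι), F y (γ (e y)) =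
      F s (γ none) * ∏ y : S, F y (γ (some y)) := by
    intro γ
    rw [← e.symm.prod_comp, Fintype.prod_option]
    simp only [Equiv.apply_symm_apply]
    rfl
  unfold permanentOn
  rw [← (Equiv.equivCongr e (Equiv.refl _)).symm.sum_comp, ← Finset.sum_coe_sort M,
    ← Fintype.sum_fiberwise (fun γ : Option S ≃ M => γ none)]
  refine Fintype.sum_congr _ _ fun m => ?_
  rw [Finset.mul_sum, ← ((Equiv.optionSubtype m).trans
    (Equiv.equivCongr (Equiv.refl _) (M.subtypeNeEquivErase m))).symm.sum_comp]
  refine Fintype.sum_congr _ _ fun γ => ?_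
  refine (hprod ((Equiv.optionSubtype m).symm
    (γ.trans (M.subtypeNeEquivErase m).symm))).trans ?_
  simp [Finset.subtypeNeEquivErase]

theorem permanentOn_expand_row {S : Finset ι} {r : ι} (hr : r ∈ S) (M : Finset κ)
    (F : ι → κ → R) :
    permanentOn S M F = ∑ m ∈ M, F r m * permanentOn (S.erase r) (M.erase m) F := by
  conv_lhs => rw [← Finset.insert_erase hr]
  exact permanentOn_insert (S.notMem_erase r) M F

theorem permanentOn_comm (S : Finset ι) (M : Finset κ) (F : ι → κ → R) :
    permanentOn S M F = permanentOn M S (fun z y => F y z) := by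
  unfold permanentOn
  refine Fintype.sum_equiv (Equiv.symmEquiv _ _) _ _ fun γ => ?_
  rw [← γ.prod_comp]
  simp

theorem permanentOn_expand_col {S : Finset ι} {M : Finset κ} {m : κ} (hm : m ∈ M)
    (F : ι → κ → R) :
    permanentOn S M F = ∑ y ∈ S, F y m * permanentOn (S.erase y) (M.erase m) F := by
  rw [permanentOn_comm, permanentOn_expand_row hm]
  simp only [permanentOn_comm (S.erase _)]

theorem permanentOn_univ [Fintype κ] (S : Finset ι) (F : ι → κ → R) :
    permanentOn S Finset.univ F = ∑ γ : S ≃ κ, ∏ y : S, F y (γ y) :=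
  Fintype.sum_equiv (Equiv.equivCongr (Equiv.refl _) (Equiv.subtypeUnivEquiv Finset.mem_univ))
    _ _ fun _ => rfl

theorem sum_permanentOn_insert {A T : Finset ι} (hAT : Disjoint A T) (M : Finset κ)
    (F : ι → κ → R) :
    ∑ s ∈ A, permanentOn (insert s T) M F =
      ∑ m ∈ M, (∑ s ∈ A, F s m) * permanentOn T (M.erase m) F := by
  simp only [Finset.sum_mul]
  rw [Finset.sum_comm]
  exact Finset.sum_congr rfl fun s hs =>
    permanentOn_insert (Finset.disjoint_left.1 hAT hs) M F

end CommSemiring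

theorem sum_sub_sum_mul_permanentOn [CommRing R] (S : Finset ι) (M : Finset κ)
    (F : ι → κ → R) (c : κ → R) (g : ι → R) :
    (∑ m ∈ M, c m - ∑ r ∈ S, g r) * permanentOn S M F =
      ∑ m ∈ M, ∑ r ∈ S, (c m - g r) * (F r m * permanentOn (S.erase r) (M.erase m) F) := by
  have hc : (∑ m ∈ M, c m) * permanentOn S M F =
      ∑ m ∈ M, ∑ r ∈ S, c m * (F r m * permanentOn (S.erase r) (M.erase m) F) := by
    rw [Finset.sum_mul]
    refine Finset.sum_congr rfl fun m hm => ?_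
    rw [permanentOn_expand_col hm, Finset.mul_sum]
  have hg : (∑ r ∈ S, g r) * permanentOn S M F =
      ∑ m ∈ M, ∑ r ∈ S, g r * (F r m * permanentOn (S.erase r) (M.erase m) F) := by
    rw [Finset.sum_mul, Finset.sum_comm]
    refine Finset.sum_congr rfl fun r hr => ?_
    rw [permanentOn_expand_row hr, Finset.mul_sum]
  simp only [sub_mul, hc, hg, ← Finset.sum_sub_distrib]

end Permanent

section BetheCancellation

variable {ι κ : Type*} [DecidableEq ι] (u v : ι → ℂ) (T' : Finset ι)

/-- The factors of a term of the weight function that involve the variable `z` attached to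
position `r` at a fixed level: `u r` and `v r` are the variables of position `r` one level below
and, when `r ∈ T'`, one level above. -/
def levelFactor (r : ι) (z : ℂ) : ℂ :=
  (z - u r)⁻¹ * if r ∈ T' then (v r - z)⁻¹ else 1

/-- Minus the logarithmic derivative of `levelFactor u v T' r`. -/
def levelPoleSum (r : ι) (z : ℂ) : ℂ :=
  (z - u r)⁻¹ + if r ∈ T' then (z - v r)⁻¹ else 0

variable {u v T'}

theorem levelFactor_pair_cancel {r : ι} {X Y : ℂ} (hXY : X ≠ Y) (hXu : X ≠ u r)
    (hYu : Y ≠ u r) (hXv : r ∈ T' → X ≠ v r) (hYv : r ∈ T' → Y ≠ v r) :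
    (2 * (X - Y)⁻¹ - levelPoleSum u v T' r X) * levelFactor u v T' r Y +
      (2 * (Y - X)⁻¹ - levelPoleSum u v T' r Y) * levelFactor u v T' r X = 0 := by
  have h1 := sub_ne_zero.2 hXY
  have h3 := sub_ne_zero.2 hXu
  have h4 := sub_ne_zero.2 hYu
  unfold levelFactor levelPoleSum
  split_ifs with hr
  · have h5 := sub_ne_zero.2 (hXv hr)
    have h6 := sub_ne_zero.2 (hYv hr)
    have h7 := sub_ne_zero.2 (hXv hr).symm
    have h8 := sub_ne_zero.2 (hYv hr).symm
    field_simp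
    ring
  · field_simp
    ring

theorem prod_levelFactor {S : Finset ι} (hT' : T' ⊆ S) (z : ι → ℂ) :
    ∏ r ∈ S, levelFactor u v T' r (z r) = (∏ r ∈ S, (z r - u r)⁻¹) * ∏ r ∈ T', (v r - z r)⁻¹ := by
  simp only [levelFactor]
  rw [Finset.prod_mul_distrib, Finset.prod_ite_mem, Finset.inter_eq_right.2 hT']

variable [Fintype κ] [DecidableEq κ] {x : κ → ℂ} {A T : Finset ι}

theorem sum_levelFactor_of_bethe (hAT : Disjoint A T) (hT' : T' ⊆ T)
    (hBethe : ∀ m, ∑ r ∈ A ∪ T, (x m - u r)⁻¹ - ∑ m' ∈ Finset.univ.erase m, 2 * (x m - x m')⁻¹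
      + ∑ r ∈ T', (x m - v r)⁻¹ = 0) (m : κ) :
    ∑ s ∈ A, levelFactor u v T' s (x m) =
      ∑ m' ∈ Finset.univ.erase m, 2 * (x m - x m')⁻¹ - ∑ r ∈ T, levelPoleSum u v T' r (x m) := by
  have hA : ∀ s ∈ A, levelFactor u v T' s (x m) = (x m - u s)⁻¹ := fun s hs => by
    rw [levelFactor, if_neg fun h => Finset.disjoint_left.1 hAT hs (hT' h), mul_one]
  have hT : ∑ r ∈ T, levelPoleSum u v T' r (x m) =
      ∑ r ∈ T, (x m - u r)⁻¹ + ∑ r ∈ T', (x m - v r)⁻¹ := by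
    simp only [levelPoleSum]
    rw [Finset.sum_add_distrib, Finset.sum_ite_mem, Finset.inter_eq_right.2 hT']
  rw [Finset.sum_congr rfl hA, hT]
  linear_combination hBethe m - Finset.sum_union hAT (f := fun r => (x m - u r)⁻¹)

theorem sum_permanentOn_levelFactor_eq_zero (hx : Function.Injective x)
    (hu : ∀ m, ∀ r ∈ A ∪ T, x m ≠ u r) (hv : ∀ m, ∀ r ∈ T', x m ≠ v r)
    (hAT : Disjoint A T) (hT' : T' ⊆ T)
    (hBethe : ∀ m, ∑ r ∈ A ∪ T, (x m - u r)⁻¹ - ∑ m' ∈ Finset.univ.erase m, 2 * (x m - x m')⁻¹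
      + ∑ r ∈ T', (x m - v r)⁻¹ = 0) :
    ∑ s ∈ A, permanentOn (insert s T) Finset.univ (fun r m => levelFactor u v T' r (x m)) = 0 := by
  set F : ι → κ → ℂ := fun r m => levelFactor u v T' r (x m)
  rw [sum_permanentOn_insert hAT]
  simp only [F, sum_levelFactor_of_bethe hAT hT' hBethe, sum_sub_sum_mul_permanentOn]
  refine Finset.sum_sum_erase_eq_zero_of_antisymm _ _ fun m _ m' _ hmm' => ?_
  rw [Finset.erase_right_comm, ← Finset.sum_add_distrib]
  refine Finset.sum_eq_zero fun r hr => ?_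
  have hrAT : r ∈ A ∪ T := Finset.mem_union_right A hr
  linear_combination permanentOn (T.erase r) ((Finset.univ.erase m').erase m) F *
    levelFactor_pair_cancel (hx.ne hmm') (hu m r hrAT) (hu m' r hrAT) (hv m r) (hv m' r)

end BetheCancellation

section LevelSet

variable {n N : ℕ}

/-- `S_i(J) = {s | j_s > i}`, for `J` with 0-based values `J s = j_s - 1`. -/
def levelSet (J : Fin n → Fin N) (i : ℕ) : Finset (Fin n) :=
  Finset.univ.filter fun r => i ≤ (J r : ℕ)

@[simp]
theorem mem_levelSet {J : Fin n → Fin N} {i : ℕ} {r : Fin n} :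
    r ∈ levelSet J i ↔ i ≤ (J r : ℕ) := by
  simp [levelSet]

theorem levelSet_antitone (J : Fin n → Fin N) : Antitone (levelSet J) :=
  fun _ _ hij _ => by simp only [mem_levelSet]; omega

theorem levelSet_eq_empty (J : Fin n → Fin N) {i : ℕ} (hi : N ≤ i) : levelSet J i = ∅ :=
  Finset.filter_false_of_mem fun r _ => by omega

theorem filter_eq_union_levelSet_succ (J : Fin n → Fin N) (a : Fin N) :
    Finset.univ.filter (fun s => J s = a) ∪ levelSet J (a + 1) = levelSet J a := by
  ext
  simp only [Finset.mem_union, Finset.mem_filter, Finset.mem_univ, true_and, mem_levelSet,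
    Fin.ext_iff]
  omega

variable {J : Fin n → Fin N} {a : ℕ} {s : Fin n}

theorem notMem_levelSet_succ (hs : (J s : ℕ) = a) : s ∉ levelSet J (a + 1) := by
  simp [hs]

theorem disjoint_filter_levelSet_succ (a : Fin N) :
    Disjoint (Finset.univ.filter fun s => J s = a) (levelSet J (a + 1)) :=
  Finset.disjoint_left.2 fun _ hr =>
    notMem_levelSet_succ (congrArg Fin.val (Finset.mem_filter.1 hr).2)

theorem levelSet_update_succ (ha : a + 1 < N) (hs : (J s : ℕ) = a) :
    levelSet (Function.update J s ⟨a + 1, ha⟩) (a + 1) = insert s (levelSet J (a + 1)) := by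
  ext r
  rcases eq_or_ne r s with rfl | hr
  · simp
  · simp [hr]

theorem levelSet_update_of_ne (ha : a + 1 < N) (hs : (J s : ℕ) = a) {i : ℕ} (hi : i ≠ a + 1) :
    levelSet (Function.update J s ⟨a + 1, ha⟩) i = levelSet J i := by
  ext r
  rcases eq_or_ne r s with rfl | hr
  · simp only [mem_levelSet, Function.update_self, hs]; omega
  · simp [Function.update_of_ne hr]

theorem succ_le_update_iff (ha : a + 1 < N) (hs : (J s : ℕ) = a) (r : Fin n) :
    a + 1 ≤ (Function.update J s ⟨a + 1, ha⟩ r : ℕ) ↔ r ∈ insert s (levelSet J (a + 1)) := by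
  rw [← levelSet_update_succ ha hs, mem_levelSet]

theorem le_update_iff_of_ne (ha : a + 1 < N) (hs : (J s : ℕ) = a) {i : ℕ} (hi : i ≠ a + 1)
    (r : Fin n) : i ≤ (Function.update J s ⟨a + 1, ha⟩ r : ℕ) ↔ i ≤ (J r : ℕ) := by
  rw [← mem_levelSet, levelSet_update_of_ne ha hs hi, mem_levelSet]

end LevelSet

section Admissible

variable {N : ℕ} {lam : Fin N → ℕ}

theorem lseq_eq_zero {i : ℕ} (hi : N ≤ i) : lseq N lam i = 0 :=
  Finset.sum_eq_zero fun b hb => absurd (Finset.mem_filter.1 hb).2 (by omega)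

theorem lt_of_lseq_pos {i : ℕ} (hi : 0 < lseq N lam i) : i < N := by
  by_contra h
  rw [lseq_eq_zero (by omega)] at hi
  exact hi.false

theorem lseq_eq_add_lseq_succ {i : ℕ} (hi : i < N) :
    lseq N lam i = lam ⟨i, hi⟩ + lseq N lam (i + 1) := by
  have hset : Finset.univ.filter (fun b : Fin N => i ≤ (b : ℕ)) =
      insert ⟨i, hi⟩ (Finset.univ.filter fun b : Fin N => i + 1 ≤ (b : ℕ)) := by
    ext b
    simp only [Finset.mem_filter, Finset.mem_insert, Finset.mem_univ, true_and, Fin.ext_iff]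
    omega
  rw [lseq, lseq, hset, Finset.sum_insert (by simp)]

theorem tcoord_of_lt (t : (a : ℕ) → Fin (lseq N lam a) → ℂ) {a j : ℕ}
    (h : j < lseq N lam a) : tcoord N lam t a j = t a ⟨j, h⟩ :=
  dif_pos h

variable {J : Fin (lseq N lam 0) → Fin N}

theorem isAdmissible_iff :
    IsAdmissible N lam J ↔ ∀ i ∈ Finset.Ico 1 N, (levelSet J i).card = lseq N lam i :=
  Iff.rfl

theorem card_levelSet_of_isAdmissible (hJ : IsAdmissible N lam J) (i : ℕ) :
    (levelSet J i).card = lseq N lam i := by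
  rcases Nat.eq_zero_or_pos i with rfl | hpos
  · simp [levelSet]
  · rcases lt_or_ge i N with hiN | hiN
    · exact hJ i (Finset.mem_Ico.2 ⟨hpos, hiN⟩)
    · rw [levelSet_eq_empty J hiN, lseq_eq_zero hiN, Finset.card_empty]

theorem card_filter_eq_of_isAdmissible (hJ : IsAdmissible N lam J) (a : Fin N) :
    (Finset.univ.filter fun s => J s = a).card = lam a := by
  have h := Finset.card_union_of_disjoint (disjoint_filter_levelSet_succ (J := J) a)
  rw [filter_eq_union_levelSet_succ, card_levelSet_of_isAdmissible hJ,
    card_levelSet_of_isAdmissible hJ, lseq_eq_add_lseq_succ a.isLt, Fin.eta] at h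
  omega

theorem isAdmissible_update_iff {a : ℕ} (ha : a + 1 < N) {s : Fin (lseq N lam 0)}
    (hs : (J s : ℕ) = a) :
    IsAdmissible N lam (Function.update J s ⟨a + 1, ha⟩) ↔
      ∀ i ∈ Finset.Ico 1 N, (levelSet J i).card + (if i = a + 1 then 1 else 0) = lseq N lam i := by
  rw [isAdmissible_iff]
  refine forall₂_congr fun i _ => ?_
  split_ifs with hi
  · rw [hi, levelSet_update_succ ha hs, Finset.card_insert_of_notMem (notMem_levelSet_succ hs)]
  · rw [levelSet_update_of_ne ha hs hi, add_zero]

end Admissible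

section BTypeExcept

variable (N : ℕ) (lam : Fin N → ℕ)

/-- The components of an element of `BType N lam J` at all levels except `a + 1`. -/
def BTypeExcept (a : ℕ) (J : Fin (lseq N lam 0) → Fin N) : Type :=
  ∀ k : {k : Fin (N - 1) // (k : ℕ) ≠ a},
    {r : Fin (lseq N lam 0) // (k : ℕ) + 1 ≤ (J r : ℕ)} ≃ Fin (lseq N lam ((k : ℕ) + 1))

instance (a : ℕ) (J : Fin (lseq N lam 0) → Fin N) : Fintype (BTypeExcept N lam a J) := by
  unfold BTypeExcept; infer_instance

variable {N lam} {J : Fin (lseq N lam 0) → Fin N} {a : ℕ} {s : Fin (lseq N lam 0)}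

/-- Same conventions as `bcoord`: level `0` is the identity, and the junk value is `0`. -/
def BTypeExcept.coord (δ : BTypeExcept N lam a J) (i : ℕ) (r : Fin (lseq N lam 0)) : ℕ :=
  if h0 : i = 0 then (r : ℕ)
  else if h : i - 1 < N - 1 ∧ i ≤ (J r : ℕ) ∧ i - 1 ≠ a then
    (δ ⟨⟨i - 1, h.1⟩, h.2.2⟩ ⟨r, by show i - 1 + 1 ≤ (J r : ℕ); omega⟩ : ℕ)
  else 0

def BTypeExcept.glue (ha : a + 1 < N) (hs : (J s : ℕ) = a) (δ : BTypeExcept N lam a J)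
    (γ : {y // y ∈ insert s (levelSet J (a + 1))} ≃ Fin (lseq N lam (a + 1))) :
    BType N lam (Function.update J s ⟨a + 1, ha⟩) :=
  fun k =>
    if hk : (k : ℕ) = a then
      ((Equiv.subtypeEquivRight fun r => by rw [hk]; exact succ_le_update_iff ha hs r).trans
        γ).trans (finCongr (by rw [hk]))
    else
      (Equiv.subtypeEquivRight (le_update_iff_of_ne (i := (k : ℕ) + 1) ha hs (by omega))).trans
        (δ ⟨k, hk⟩)

def BTypeExcept.glueEquiv (ha : a + 1 < N) (hs : (J s : ℕ) = a) :
    BTypeExcept N lam a J × ({y // y ∈ insert s (levelSet J (a + 1))} ≃ Fin (lseq N lam (a + 1)))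
      ≃ BType N lam (Function.update J s ⟨a + 1, ha⟩) where
  toFun z := z.1.glue ha hs z.2
  invFun β :=
    (fun k => (Equiv.subtypeEquivRight fun r =>
        (le_update_iff_of_ne (i := (k.1 : ℕ) + 1) ha hs (by have := k.2; omega) r).symm).trans
          (β k.1),
      (Equiv.subtypeEquivRight (succ_le_update_iff ha hs)).symm.trans (β ⟨a, by omega⟩))
  left_inv z := by
    obtain ⟨δ, γ⟩ := z
    refine Prod.ext ?_ ?_
    · funext k
      ext r
      simp only [glue, dif_neg k.2, Equiv.trans_apply, Equiv.subtypeEquivRight_apply]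
    · ext y
      simp [glue]
  right_inv β := by
    funext k
    by_cases hk : (k : ℕ) = a
    · obtain ⟨k, hk'⟩ := k
      subst hk
      ext r
      simp [glue]
    · ext r
      simp only [glue, dif_neg hk, Equiv.trans_apply, Equiv.subtypeEquivRight_apply]

variable (δ : BTypeExcept N lam a J)

theorem BTypeExcept.coord_of_ne {i : ℕ} (h0 : i ≠ 0) {r : Fin (lseq N lam 0)}
    (hir : i ≤ (J r : ℕ)) (hia : i - 1 ≠ a) :
    δ.coord i r = (δ ⟨⟨i - 1, by have := (J r).isLt; omega⟩, hia⟩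
      ⟨r, show i - 1 + 1 ≤ (J r : ℕ) by omega⟩ : ℕ) := by
  rw [coord, dif_neg h0, dif_pos ⟨by have := (J r).isLt; omega, hir, hia⟩]

theorem BTypeExcept.coord_lt {i : ℕ} (hi : i = 0 ∨ i - 1 ≠ a) {r : Fin (lseq N lam 0)}
    (hr : i ≤ (J r : ℕ)) : δ.coord i r < lseq N lam i := by
  rcases eq_or_ne i 0 with rfl | h0
  · exact r.isLt
  · rw [δ.coord_of_ne h0 hr (hi.resolve_left h0)]
    exact (Fin.isLt _).trans_eq (congrArg (lseq N lam) (show i - 1 + 1 = i by omega))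

theorem BTypeExcept.sum_coord {i : ℕ} (hi : i = 0 ∨ i - 1 ≠ a) (f : ℕ → ℂ) :
    ∑ r ∈ levelSet J i, f (δ.coord i r) = ∑ k ∈ Finset.range (lseq N lam i), f k := by
  rcases eq_or_ne i 0 with rfl | h0
  · simp [levelSet, coord, Finset.sum_range]
  have hia := hi.resolve_left h0
  refine Finset.sum_bij (fun r _ => δ.coord i r) (fun r hr => ?_) (fun r₁ h₁ r₂ h₂ h => ?_)
    (fun k hk => ?_) fun _ _ => rfl
  · exact Finset.mem_range.2 (δ.coord_lt hi (mem_levelSet.1 hr))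
  · rw [mem_levelSet] at h₁ h₂
    rw [δ.coord_of_ne h0 h₁ hia, δ.coord_of_ne h0 h₂ hia] at h
    simpa using (δ _).injective (Fin.ext h)
  · have hiN : i - 1 < N - 1 := by
      have := lt_of_lseq_pos (lam := lam) ((Nat.zero_le k).trans_lt (Finset.mem_range.1 hk))
      omega
    have hk' : k < lseq N lam (i - 1 + 1) := by
      rw [Nat.sub_add_cancel (Nat.pos_of_ne_zero h0)]; exact Finset.mem_range.1 hk
    set r := (δ ⟨⟨i - 1, hiN⟩, hia⟩).symm ⟨k, hk'⟩ with hr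
    have hri : i ≤ (J r : ℕ) := by have : i - 1 + 1 ≤ (J r : ℕ) := r.2; omega
    refine ⟨r, mem_levelSet.2 hri, ?_⟩
    rw [δ.coord_of_ne h0 hri hia]
    simp only [Subtype.coe_eta, hr, Equiv.apply_symm_apply]

theorem BTypeExcept.sum_tcoord_coord (t : (a : ℕ) → Fin (lseq N lam a) → ℂ) {i : ℕ}
    (hi : i = 0 ∨ i - 1 ≠ a) (g : ℂ → ℂ) :
    ∑ r ∈ levelSet J i, g (tcoord N lam t i (δ.coord i r)) = ∑ j, g (t i j) := by
  rw [δ.sum_coord hi (fun k => g (tcoord N lam t i k)), Finset.sum_range]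
  exact Fintype.sum_congr _ _ fun j => by rw [tcoord_of_lt t j.isLt]

variable (ha : a + 1 < N) (hs : (J s : ℕ) = a)
  (γ : {y // y ∈ insert s (levelSet J (a + 1))} ≃ Fin (lseq N lam (a + 1)))

theorem BTypeExcept.bcoord_glue_of_ne {i : ℕ} {r : Fin (lseq N lam 0)} (hir : i ≤ (J r : ℕ))
    (hia : i ≠ a + 1) :
    bcoord N lam (Function.update J s ⟨a + 1, ha⟩) (δ.glue ha hs γ) i r = δ.coord i r := by
  rcases eq_or_ne i 0 with rfl | h0
  · rfl
  have hir' : i ≤ (Function.update J s ⟨a + 1, ha⟩ r : ℕ) := by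
    rcases eq_or_ne r s with rfl | hrs
    · simp only [Function.update_self]; omega
    · rwa [Function.update_of_ne hrs]
  have hka : i - 1 ≠ a := by omega
  rw [bcoord, dif_neg h0, dif_pos ⟨by have := (J r).isLt; omega, hir'⟩, δ.coord_of_ne h0 hir hka]
  simp only [glue, dif_neg hka, Equiv.trans_apply, Equiv.subtypeEquivRight_apply]

theorem BTypeExcept.bcoord_glue_succ {r : Fin (lseq N lam 0)}
    (hr : r ∈ insert s (levelSet J (a + 1))) :
    bcoord N lam (Function.update J s ⟨a + 1, ha⟩) (δ.glue ha hs γ) (a + 1) r = γ ⟨r, hr⟩ := by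
  rw [bcoord, dif_neg (Nat.succ_ne_zero a), dif_pos ⟨by omega, (succ_le_update_iff ha hs r).2 hr⟩]
  simp only [glue, Nat.add_sub_cancel, dif_pos, Equiv.trans_apply,
    Equiv.subtypeEquivRight_apply, finCongr_apply, Fin.val_cast]

end BTypeExcept

section WeightTerm

variable {N : ℕ} {lam : Fin N → ℕ} (t : (a : ℕ) → Fin (lseq N lam a) → ℂ)

def weightFactor (J : Fin (lseq N lam 0) → Fin N) (β : BType N lam J) (i : ℕ)
    (r : Fin (lseq N lam 0)) : ℂ :=
  (tcoord N lam t i (bcoord N lam J β i r) - tcoord N lam t (i - 1) (bcoord N lam J β (i - 1) r))⁻¹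

def weightTerm (J : Fin (lseq N lam 0) → Fin N) (β : BType N lam J) : ℂ :=
  ∏ r, ∏ i ∈ Finset.Icc 1 (J r : ℕ), weightFactor t J β i r

theorem weightFun_of_isAdmissible {J : Fin (lseq N lam 0) → Fin N}
    (hJ : IsAdmissible N lam J) : weightFun N lam t J = ∑ β, weightTerm t J β :=
  if_pos hJ

theorem weightFun_of_not_isAdmissible {J : Fin (lseq N lam 0) → Fin N}
    (hJ : ¬IsAdmissible N lam J) : weightFun N lam t J = 0 :=
  if_neg hJ

theorem prod_prod_Icc_eq_prod_levelSet {n : ℕ} {M : Type*} [CommMonoid M] (J : Fin n → Fin N)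
    (f : ℕ → Fin n → M) :
    ∏ r, ∏ i ∈ Finset.Icc 1 (J r : ℕ), f i r = ∏ i ∈ Finset.Icc 1 N, ∏ r ∈ levelSet J i, f i r :=
  Finset.prod_comm' fun r i => by
    simp only [Finset.mem_univ, Finset.mem_Icc, mem_levelSet, true_and]
    have := (J r).isLt
    omega

variable {J : Fin (lseq N lam 0) → Fin N} {a : ℕ} (δ : BTypeExcept N lam a J)

def BTypeExcept.factor (i : ℕ) (r : Fin (lseq N lam 0)) : ℂ :=
  (tcoord N lam t i (δ.coord i r) - tcoord N lam t (i - 1) (δ.coord (i - 1) r))⁻¹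

/-- The factors of `weightTerm` at the levels `i ≠ a + 1, a + 2`: exactly those that do not
involve the bijection at level `a + 1`. -/
def BTypeExcept.restTerm : ℂ :=
  ∏ i ∈ ((Finset.Icc 1 N).erase (a + 1)).erase (a + 2), ∏ r ∈ levelSet J i, δ.factor t i r

def BTypeExcept.succLevelFactor : Fin (lseq N lam 0) → ℂ → ℂ :=
  levelFactor (fun r => tcoord N lam t a (δ.coord a r))
    (fun r => tcoord N lam t (a + 2) (δ.coord (a + 2) r)) (levelSet J (a + 2))

variable {s : Fin (lseq N lam 0)} (ha : a + 1 < N) (hs : (J s : ℕ) = a)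
  (γ : {y // y ∈ insert s (levelSet J (a + 1))} ≃ Fin (lseq N lam (a + 1)))

theorem BTypeExcept.weightFactor_glue_of_ne {i : ℕ} {r : Fin (lseq N lam 0)}
    (hir : i ≤ (J r : ℕ)) (hi1 : i ≠ a + 1) (hi2 : i ≠ a + 2) :
    weightFactor t (Function.update J s ⟨a + 1, ha⟩) (δ.glue ha hs γ) i r = δ.factor t i r := by
  rw [weightFactor, δ.bcoord_glue_of_ne ha hs γ hir hi1,
    δ.bcoord_glue_of_ne ha hs γ (by omega) (by omega), factor]

theorem BTypeExcept.prod_weightFactor_glue_succ :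
    (∏ r ∈ insert s (levelSet J (a + 1)),
        weightFactor t (Function.update J s ⟨a + 1, ha⟩) (δ.glue ha hs γ) (a + 1) r) *
      ∏ r ∈ levelSet J (a + 2),
        weightFactor t (Function.update J s ⟨a + 1, ha⟩) (δ.glue ha hs γ) (a + 2) r =
      ∏ y : {y // y ∈ insert s (levelSet J (a + 1))}, δ.succLevelFactor t y (t (a + 1) (γ y)) := by
  set β := δ.glue ha hs γ
  have hT' : levelSet J (a + 2) ⊆ insert s (levelSet J (a + 1)) :=
    (levelSet_antitone J (Nat.le_succ _)).trans (Finset.subset_insert _ _)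
  have hγ : ∀ y : {y // y ∈ insert s (levelSet J (a + 1))},
      t (a + 1) (γ y) = tcoord N lam t (a + 1) (bcoord N lam _ β (a + 1) y) := fun y => by
    rw [δ.bcoord_glue_succ ha hs γ y.2, tcoord_of_lt]
  have haJ : ∀ r ∈ insert s (levelSet J (a + 1)), a ≤ (J r : ℕ) := by
    intro r hr
    rcases Finset.mem_insert.1 hr with rfl | hr
    · exact hs.ge
    · exact (Nat.le_succ a).trans (mem_levelSet.1 hr)
  simp only [hγ, BTypeExcept.succLevelFactor]
  rw [Finset.prod_coe_sort (insert s (levelSet J (a + 1)))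
    (fun r => levelFactor _ _ _ r (tcoord N lam t (a + 1) (bcoord N lam _ β (a + 1) r))),
    prod_levelFactor hT']
  congr 1
  · refine Finset.prod_congr rfl fun r hr => ?_
    rw [weightFactor, Nat.add_sub_cancel, δ.bcoord_glue_of_ne ha hs γ (haJ r hr) (by omega)]
  · refine Finset.prod_congr rfl fun r hr => ?_
    rw [weightFactor, show a + 2 - 1 = a + 1 by omega,
      δ.bcoord_glue_of_ne ha hs γ (mem_levelSet.1 hr) (by omega)]

theorem BTypeExcept.weightTerm_glue :
    weightTerm t (Function.update J s ⟨a + 1, ha⟩) (δ.glue ha hs γ) =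
      δ.restTerm t * ∏ y : {y // y ∈ insert s (levelSet J (a + 1))},
        δ.succLevelFactor t y (t (a + 1) (γ y)) := by
  have h1 : a + 1 ∈ Finset.Icc 1 N := Finset.mem_Icc.2 ⟨by omega, by omega⟩
  have h2 : a + 2 ∈ (Finset.Icc 1 N).erase (a + 1) :=
    Finset.mem_erase.2 ⟨by omega, Finset.mem_Icc.2 ⟨by omega, by omega⟩⟩
  rw [weightTerm, prod_prod_Icc_eq_prod_levelSet, ← Finset.mul_prod_erase _ _ h1,
    ← Finset.mul_prod_erase _ _ h2, levelSet_update_succ ha hs,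
    levelSet_update_of_ne ha hs (i := a + 2) (by omega), ← mul_assoc, mul_comm,
    δ.prod_weightFactor_glue_succ]
  congr 1
  refine Finset.prod_congr rfl fun i hi => ?_
  obtain ⟨hi2, hi1, -⟩ := Finset.mem_erase.1 hi |>.imp_right Finset.mem_erase.1
  rw [levelSet_update_of_ne ha hs hi1]
  exact Finset.prod_congr rfl fun r hr =>
    δ.weightFactor_glue_of_ne t ha hs γ (mem_levelSet.1 hr) hi1 hi2

theorem weightFun_update (hs : (J s : ℕ) = a)
    (hJ : IsAdmissible N lam (Function.update J s ⟨a + 1, ha⟩)) :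
    weightFun N lam t (Function.update J s ⟨a + 1, ha⟩) =
      ∑ δ : BTypeExcept N lam a J, δ.restTerm t *
        permanentOn (insert s (levelSet J (a + 1))) Finset.univ
          (fun r m => δ.succLevelFactor t r (t (a + 1) m)) := by
  rw [weightFun_of_isAdmissible t hJ, ← (BTypeExcept.glueEquiv ha hs).sum_comp,
    Fintype.sum_prod_type]
  refine Fintype.sum_congr _ _ fun δ => ?_
  rw [permanentOn_univ, Finset.mul_sum]
  exact Fintype.sum_congr _ _ fun γ => δ.weightTerm_glue t ha hs γ

end WeightTerm

section GlAction

variable {N n : ℕ}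

theorem glAct_apply (a b : Fin N) (v : (Fin n → Fin N) → ℂ) (J : Fin n → Fin N) :
    glAct N n a b v J = ∑ s ∈ Finset.univ.filter (fun s => J s = a), v (Function.update J s b) :=
  (Finset.sum_filter _ _).symm

theorem glAct_zero (a b : Fin N) : glAct N n a b 0 = 0 := by
  funext J
  simp [glAct]

theorem glAct_glAct_apply (a c d b : Fin N) (v : (Fin n → Fin N) → ℂ) (J : Fin n → Fin N) :
    glAct N n a c (glAct N n d b v) J = (if c = d then glAct N n a b v J else 0) +
      ∑ s, ∑ s' ∈ Finset.univ.erase s,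
        if J s = a ∧ J s' = d then v (Function.update (Function.update J s c) s' b) else 0 := by
  have hs : ∀ s, (if J s = a then ∑ s', if Function.update J s c s' = d then
        v (Function.update (Function.update J s c) s' b) else 0 else 0) =
      (if c = d then (if J s = a then v (Function.update J s b) else 0) else 0) +
        ∑ s' ∈ Finset.univ.erase s,
          if J s = a ∧ J s' = d then v (Function.update (Function.update J s c) s' b) else 0 := by
    intro s
    rw [← Finset.add_sum_erase _ _ (Finset.mem_univ s)]
    by_cases hJs : J s = a
    · simp only [hJs, Function.update_self, Function.update_idem, true_and, if_true]
      congr 1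
      exact Finset.sum_congr rfl fun s' hs' =>
        by rw [Function.update_of_ne (Finset.ne_of_mem_erase hs')]
    · simp [hJs]
  simp only [glAct, hs, Finset.sum_add_distrib]
  split_ifs <;> simp

theorem glAct_eq_sub_glAct {a b : Fin N} (hab : a ≠ b) (c : Fin N) (v : (Fin n → Fin N) → ℂ) :
    glAct N n a b v = glAct N n a c (glAct N n c b v) - glAct N n c b (glAct N n a c v) := by
  funext J
  rw [Pi.sub_apply, glAct_glAct_apply, glAct_glAct_apply, if_pos rfl, if_neg hab.symm, zero_add,
    add_sub_assoc, left_eq_add, sub_eq_zero]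
  refine Finset.sum_comm' (fun s s' => ?_) |>.trans (Finset.sum_congr rfl fun s' _ =>
    Finset.sum_congr rfl fun s hs => ?_)
  · simp only [Finset.mem_univ, Finset.mem_erase, ne_eq, true_and, and_true]
    exact ⟨Ne.symm, Ne.symm⟩
  · simp only [and_comm, Function.update_comm (Finset.ne_of_mem_erase hs)]

end GlAction

section SingularVector

variable {N : ℕ} {lam : Fin N → ℕ} {t : (a : ℕ) → Fin (lseq N lam a) → ℂ}

theorem BTypeExcept.bethe {J : Fin (lseq N lam 0) → Fin N} {a : ℕ} (δ : BTypeExcept N lam a J)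
    (hBAE : BAE N lam t) (ha : a + 1 < N) (m : Fin (lseq N lam (a + 1))) :
    ∑ r ∈ levelSet J a, (t (a + 1) m - tcoord N lam t a (δ.coord a r))⁻¹
      - ∑ m' ∈ Finset.univ.erase m, 2 * (t (a + 1) m - t (a + 1) m')⁻¹
      + ∑ r ∈ levelSet J (a + 2), (t (a + 1) m - tcoord N lam t (a + 2) (δ.coord (a + 2) r))⁻¹
      = 0 := by
  rw [δ.sum_tcoord_coord t (i := a) (by omega) fun z => (t (a + 1) m - z)⁻¹,
    δ.sum_tcoord_coord t (i := a + 2) (by omega) fun z => (t (a + 1) m - z)⁻¹,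
    ← Finset.filter_ne' Finset.univ m]
  have h := hBAE (a + 1) (by omega) ha m
  simp only [div_eq_mul_inv, one_mul] at h
  exact h

theorem BTypeExcept.sum_permanentOn_eq_zero {J : Fin (lseq N lam 0) → Fin N} {a : Fin N}
    (δ : BTypeExcept N lam a J) (hsimple : ∀ a < N, Function.Injective (t a))
    (hdisj : ∀ a : ℕ, 1 ≤ a → a < N →
      ∀ (j : Fin (lseq N lam a)) (j' : Fin (lseq N lam (a - 1))), t a j ≠ t (a - 1) j')
    (hBAE : BAE N lam t) (ha : (a : ℕ) + 1 < N) :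
    ∑ s ∈ Finset.univ.filter (fun s => J s = a), permanentOn (insert s (levelSet J (a + 1)))
      Finset.univ (fun r m => δ.succLevelFactor t r (t (a + 1) m)) = 0 := by
  refine sum_permanentOn_levelFactor_eq_zero (hsimple _ ha) (fun m r hr => ?_) (fun m r hr => ?_)
    (disjoint_filter_levelSet_succ a) (levelSet_antitone J (Nat.le_succ _)) ?_
  · rw [filter_eq_union_levelSet_succ] at hr
    have hlt := δ.coord_lt (i := a) (by omega) (mem_levelSet.1 hr)
    rw [tcoord_of_lt t hlt]
    exact hdisj _ (by omega) ha m _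
  · have hlt := δ.coord_lt (i := a + 2) (by omega) (mem_levelSet.1 hr)
    rw [tcoord_of_lt t hlt]
    exact (hdisj _ (by omega) (lt_of_lseq_pos ((Nat.zero_le _).trans_lt hlt)) _ m).symm
  · rw [filter_eq_union_levelSet_succ]
    exact δ.bethe hBAE ha

theorem glAct_succ_weightFun (hsimple : ∀ a < N, Function.Injective (t a))
    (hdisj : ∀ a : ℕ, 1 ≤ a → a < N →
      ∀ (j : Fin (lseq N lam a)) (j' : Fin (lseq N lam (a - 1))), t a j ≠ t (a - 1) j')
    (hBAE : BAE N lam t) (a : Fin N) (ha : (a : ℕ) + 1 < N) :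
    glAct N (lseq N lam 0) a ⟨a + 1, ha⟩ (weightFun N lam t) = 0 := by
  funext J
  rw [glAct_apply]
  have hA : ∀ s ∈ Finset.univ.filter (fun s => J s = a), (J s : ℕ) = a := fun s hs =>
    congrArg Fin.val (Finset.mem_filter.1 hs).2
  by_cases hP : ∀ i ∈ Finset.Ico 1 N,
      (levelSet J i).card + (if i = a + 1 then 1 else 0) = lseq N lam i
  · rw [Finset.sum_congr rfl fun s hs => weightFun_update t ha (hA s hs)
      ((isAdmissible_update_iff ha (hA s hs)).2 hP), Finset.sum_comm]
    refine Finset.sum_eq_zero fun δ _ => ?_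
    rw [← Finset.mul_sum, δ.sum_permanentOn_eq_zero hsimple hdisj hBAE ha, mul_zero]
  · exact Finset.sum_eq_zero fun s hs => weightFun_of_not_isAdmissible t
      fun h => hP ((isAdmissible_update_iff ha (hA s hs)).1 h)

theorem glAct_weightFun_of_lt (hsimple : ∀ a < N, Function.Injective (t a))
    (hdisj : ∀ a : ℕ, 1 ≤ a → a < N →
      ∀ (j : Fin (lseq N lam a)) (j' : Fin (lseq N lam (a - 1))), t a j ≠ t (a - 1) j')
    (hBAE : BAE N lam t) {a b : Fin N} (hab : a < b) :
    glAct N (lseq N lam 0) a b (weightFun N lam t) = 0 := by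
  obtain ⟨d, hd⟩ : ∃ d, (b : ℕ) = a + 1 + d := ⟨b - (a + 1), by omega⟩
  induction d generalizing b with
  | zero =>
    rw [show b = ⟨a + 1, by omega⟩ from Fin.ext hd]
    exact glAct_succ_weightFun hsimple hdisj hBAE a _
  | succ d ih =>
    have hc : (a : ℕ) + 1 + d < N := by omega
    rw [glAct_eq_sub_glAct hab.ne ⟨a + 1 + d, hc⟩,
      show b = ⟨a + 1 + d + 1, by omega⟩ from Fin.ext hd,
      glAct_succ_weightFun hsimple hdisj hBAE ⟨a + 1 + d, hc⟩, ih (Fin.mk_lt_mk.2 (by omega)) rfl,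
      glAct_zero, glAct_zero, sub_zero]

theorem glAct_self_weightFun (t : (a : ℕ) → Fin (lseq N lam a) → ℂ) (a : Fin N) :
    glAct N (lseq N lam 0) a a (weightFun N lam t) = (lam a : ℂ) • weightFun N lam t := by
  funext J
  rw [glAct_apply, Finset.sum_congr rfl fun s hs => by
      rw [← (Finset.mem_filter.1 hs).2, Function.update_eq_self],
    Finset.sum_const, Pi.smul_apply, smul_eq_mul, nsmul_eq_mul]
  by_cases hJ : IsAdmissible N lam J
  · rw [card_filter_eq_of_isAdmissible hJ]
  · rw [weightFun_of_not_isAdmissible t hJ, mul_zero, mul_zero]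

end SingularVector

theorem statement8_general (N : ℕ) (lam : Fin N → ℕ)
    (t : (a : ℕ) → Fin (lseq N lam a) → ℂ)
    (hsimple : ∀ a < N, Function.Injective (t a))
    (hdisj : ∀ a : ℕ, 1 ≤ a → a < N →
      ∀ (j : Fin (lseq N lam a)) (j' : Fin (lseq N lam (a - 1))), t a j ≠ t (a - 1) j')
    (hBAE : BAE N lam t) :
    (∀ a b : Fin N, a < b → glAct N (lseq N lam 0) a b (weightFun N lam t) = 0) ∧
    (∀ a : Fin N,
      glAct N (lseq N lam 0) a a (weightFun N lam t) = (lam a : ℂ) • weightFun N lam t) :=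
  ⟨fun _ _ hab => glAct_weightFun_of_lt hsimple hdisj hBAE hab, glAct_self_weightFun t⟩

/-- if `t` has pairwise distinct coordinates in each level, disjoint
consecutive levels, and satisfies the Bethe ansatz equations, then `ω(t)` is a
singular vector of weight `λ` in `(ℂ^N)^{⊗n}`. -/
theorem statement8 (N : ℕ) (hN : 1 ≤ N) (lam : Fin N → ℕ) (hlam : Antitone lam)
    (t : (a : ℕ) → Fin (lseq N lam a) → ℂ)
    (hsimple : ∀ a < N, Function.Injective (t a))
    (hdisj : ∀ a : ℕ, 1 ≤ a → a < N →
      ∀ (j : Fin (lseq N lam a)) (j' : Fin (lseq N lam (a - 1))), t a j ≠ t (a - 1) j')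
    (hBAE : BAE N lam t) :
    (∀ a b : Fin N, a < b → glAct N (lseq N lam 0) a b (weightFun N lam t) = 0) ∧
    (∀ a : Fin N,
      glAct N (lseq N lam 0) a a (weightFun N lam t) = (lam a : ℂ) • weightFun N lam t) :=
  statement8_general N lam t hsimple hdisj hBAE
end
end

section
/- Let X ∈ Ω_λ be generic and let z ∈ ℂ be a root of y_0 (the monic polynomial proportional to the Wronskian of a basis of X). Then the set of orders of vanishing at z of the nonzero elements of X is exactly {0, 1, …, N−2, N}: for each m in this set there exists f ∈ X, f ≠ 0, vanishing to order exactly m at z, and no nonzero element of X vanishes to order N−1 or to order greater than N at z. (This expresses that the exponents of the associated operator D_X at each root of y_0 are 0, 1, …, N−2, N.) -/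
open Polynomial

noncomputable section

/-!
Since `y 0` is squarefree and `Wr f` is a nonzero multiple of it, `Wr f` vanishes to order
exactly one at `z`. Gaussian elimination inside `X` turns `f` into a family `g` whose orders of
vanishing `mᵢ` at `z` are pairwise distinct, changing the Wronskian only by a nonzero factor.
Expanding the determinant, `(u - z) ^ (∑ mᵢ - N(N-1)/2)` divides `Wr g`; and if
`{mᵢ} = {0, …, N-1}` then the Wronskian matrix at `z` is triangular up to a permutation of its
rows, with nonzero diagonal, so `Wr g` does not vanish at `z`. Hence `∑ mᵢ = N(N-1)/2 + 1`,
which forces `{mᵢ} = {0, …, N-2, N}`. Finally, polynomials with distinct orders at `z` are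
linearly independent, so the `N`-dimensional space `X` realises no further order.
-/

local notation "Wr" => @_root_.wronskian _

theorem Nat.succ_choose_two (n : ℕ) : (n + 1).choose 2 = n.choose 2 + n := by
  rw [Nat.choose_succ_succ', Nat.choose_one_right, add_comm]

namespace Finset

theorem choose_two_card_le_sum (s : Finset ℕ) : s.card.choose 2 ≤ ∑ x ∈ s, x := by
  induction s using Finset.induction_on_max with
  | empty => simp
  | insert a s hlt ih =>
    have hcard : s.card ≤ a := by
      simpa using card_le_card fun x hx => mem_range.2 (hlt x hx)
    rw [card_insert_of_notMem fun h => (hlt a h).false, sum_insert fun h => (hlt a h).false,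
      Nat.succ_choose_two]
    omega

theorem choose_two_card_add_le_sum {s : Finset ℕ} {x : ℕ} (hx : x ∈ s) :
    s.card.choose 2 + x + 1 ≤ ∑ y ∈ s, y + s.card := by
  have h := choose_two_card_le_sum (s.erase x)
  rw [← sum_erase_add _ _ hx, ← card_erase_add_one hx, Nat.succ_choose_two]
  omega

theorem eq_range_of_sum_eq_choose_two {s : Finset ℕ} (h : ∑ x ∈ s, x = s.card.choose 2) :
    s = range s.card := by
  refine eq_of_subset_of_card_le (fun x hx => ?_) (by simp)
  have := choose_two_card_add_le_sum hx
  rw [mem_range]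
  omega

theorem eq_erase_of_sum_eq_choose_two_add_one {s : Finset ℕ}
    (h : ∑ x ∈ s, x = s.card.choose 2 + 1) : s = (range (s.card + 1)).erase (s.card - 1) := by
  have hsub : s ⊆ range (s.card + 1) := fun x hx => by
    have := choose_two_card_add_le_sum hx
    rw [mem_range]
    omega
  obtain ⟨e, he⟩ : ∃ e, range (s.card + 1) \ s = {e} := by
    rw [← card_eq_one, card_sdiff_of_subset hsub, card_range]
    omega
  have hes : s = (range (s.card + 1)).erase e := by
    rw [← sdiff_singleton_eq_erase, ← he, sdiff_sdiff_eq_self hsub]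
  have hsum := sum_erase_add _ (fun x => x) (mem_sdiff.1 (he ▸ mem_singleton_self e : e ∈ _)).1
  rw [← hes, h, sum_range_id, ← Nat.choose_two_right, Nat.succ_choose_two] at hsum
  rwa [show e = s.card - 1 by omega] at hes

end Finset

section Orders

variable {R K : Type*} [CommRing R] [Field K]

theorem pow_succ_dvd_smul_sub_smul (z : R) {m : ℕ} {p q p₁ q₁ : R[X]}
    (hp : p = (X - C z) ^ m * p₁) (hq : q = (X - C z) ^ m * q₁) :
    (X - C z) ^ (m + 1) ∣ q₁.eval z • p - p₁.eval z • q := by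
  have hroot : X - C z ∣ q₁.eval z • p₁ - p₁.eval z • q₁ := by
    rw [dvd_iff_isRoot]
    simp [mul_comm]
  rw [pow_succ]
  convert mul_dvd_mul_left ((X - C z) ^ m) hroot using 1
  rw [hp, hq, mul_sub, mul_smul_comm, mul_smul_comm]

theorem rootMultiplicity_C_mul [IsDomain R] (z : R) {a : R} (ha : a ≠ 0) (p : R[X]) :
    rootMultiplicity z (C a * p) = rootMultiplicity z p := by
  rcases eq_or_ne p 0 with rfl | hp
  · simp
  · rw [rootMultiplicity_mul (mul_ne_zero (C_ne_zero.2 ha) hp), rootMultiplicity_C, zero_add]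

theorem rootMultiplicity_le_one_of_squarefree [Nontrivial R] {p : R[X]} (hp : Squarefree p)
    (z : R) : rootMultiplicity z p ≤ 1 := by
  have h := (hp.squarefree_of_dvd (pow_rootMultiplicity_dvd p z))
    |>.eq_zero_or_one_of_pow_of_not_isUnit (not_isUnit_X_sub_C z)
  omega

theorem eval_iterate_derivative_rootMultiplicity_ne_zero [IsDomain R] [CharZero R] {p : R[X]}
    (hp : p ≠ 0) (z : R) : (derivative^[p.rootMultiplicity z] p).eval z ≠ 0 := by
  rw [eval_iterate_derivative_rootMultiplicity, nsmul_eq_mul]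
  exact mul_ne_zero (Nat.cast_ne_zero.2 (Nat.factorial_ne_zero _))
    (eval_divByMonic_pow_rootMultiplicity_ne_zero z hp)

theorem linearIndependent_of_injective_rootMultiplicity {ι : Type*} [Fintype ι] (z : K)
    {g : ι → K[X]} (hg : ∀ i, g i ≠ 0)
    (hinj : Function.Injective fun i => rootMultiplicity z (g i)) : LinearIndependent K g := by
  classical
  rw [Fintype.linearIndependent_iff]
  intro c hc
  by_contra! hne
  obtain ⟨i₀, hi₀, hmin⟩ := (Finset.univ.filter (c · ≠ 0)).exists_min_image
    (fun i => rootMultiplicity z (g i)) (by simpa [Finset.filter_nonempty_iff] using hne)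
  have hci₀ : c i₀ ≠ 0 := (Finset.mem_filter.1 hi₀).2
  set m := rootMultiplicity z (g i₀)
  -- every other term vanishes to order > m, hence so does `c i₀ • g i₀`
  have hrest : (X - C z) ^ (m + 1) ∣ ∑ i ∈ Finset.univ.erase i₀, c i • g i := by
    refine Finset.dvd_sum fun i hi => ?_
    by_cases hci : c i = 0
    · simp [hci]
    have hlt : m < rootMultiplicity z (g i) :=
      lt_of_le_of_ne (hmin i (by simp [hci])) fun h => (Finset.ne_of_mem_erase hi) (hinj h).symm
    rw [smul_eq_C_mul]
    exact ((le_rootMultiplicity_iff (hg i)).1 hlt).mul_left _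
  have hi₀dvd : (X - C z) ^ (m + 1) ∣ g i₀ := by
    rw [← Finset.add_sum_erase _ _ (Finset.mem_univ i₀), add_eq_zero_iff_eq_neg] at hc
    rw [← (isUnit_C.2 hci₀.isUnit).dvd_mul_left, ← smul_eq_C_mul, hc]
    exact hrest.neg_right
  exact Nat.not_succ_le_self m ((le_rootMultiplicity_iff (hg i₀)).2 hi₀dvd)

theorem card_le_finrank_of_forall_exists_rootMultiplicity_eq (z : K) (V : Submodule K K[X])
    [FiniteDimensional K V] (s : Finset ℕ)
    (hs : ∀ m ∈ s, ∃ p ∈ V, p ≠ 0 ∧ rootMultiplicity z p = m) :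
    s.card ≤ Module.finrank K V := by
  choose p hpV hp0 hpm using hs
  let v : s → V := fun m => ⟨p m m.2, hpV m m.2⟩
  have hv : LinearIndependent K (V.subtype ∘ v) :=
    linearIndependent_of_injective_rootMultiplicity z (fun m => hp0 m m.2)
      fun m m' h => Subtype.ext ((hpm m m.2).symm.trans (h.trans (hpm m' m'.2)))
  simpa using (LinearIndependent.of_comp _ hv).fintype_card_le_finrank

theorem exists_rootMultiplicity_eq_iff_mem_image {n : ℕ} (z : K) (V : Submodule K K[X])
    [FiniteDimensional K V] (hV : Module.finrank K V = n) (g : Fin n → K[X])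
    (hgV : ∀ i, g i ∈ V) (hg : ∀ i, g i ≠ 0)
    (hinj : Function.Injective fun i => rootMultiplicity z (g i)) (m : ℕ) :
    (∃ p ∈ V, p ≠ 0 ∧ rootMultiplicity z p = m) ↔
      m ∈ Finset.univ.image fun i => rootMultiplicity z (g i) := by
  classical
  constructor
  · intro hm
    by_contra hmT
    have := card_le_finrank_of_forall_exists_rootMultiplicity_eq z V
      (insert m (Finset.univ.image fun i => rootMultiplicity z (g i))) (by
        simp only [Finset.mem_insert, Finset.mem_image, Finset.mem_univ, true_and]
        rintro _ (rfl | ⟨i, rfl⟩)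
        exacts [hm, ⟨g i, hgV i, hg i, rfl⟩])
    rw [Finset.card_insert_of_notMem hmT, Finset.card_image_of_injective _ hinj] at this
    simp [hV] at this
  · simp only [Finset.mem_image, Finset.mem_univ, true_and]
    rintro ⟨i, rfl⟩
    exact ⟨g i, hgV i, hg i, rfl⟩

end Orders

section Wronskian

variable {n : ℕ}

def wronskianMatrix (g : Fin n → ℂ[X]) : Matrix (Fin n) (Fin n) ℂ[X] :=
  Matrix.of fun i j => derivative^[j] (g i)

theorem wronskian_eq_det (g : Fin n → ℂ[X]) : Wr g = (wronskianMatrix g).det := rfl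

theorem wrTail_zero {N : ℕ} (f : Fin N → ℂ[X]) : wrTail f 0 = Wr f := by
  simp [wrTail]

theorem ne_zero_of_wronskian_ne_zero {g : Fin n → ℂ[X]} (hg : Wr g ≠ 0) (i : Fin n) :
    g i ≠ 0 := by
  intro hi
  refine hg (Matrix.det_eq_zero_of_row_eq_zero i fun j => ?_)
  simp [hi]

theorem pow_dvd_wronskian (q : ℂ[X]) {g : Fin n → ℂ[X]} {m : Fin n → ℕ}
    (hm : ∀ i, q ^ m i ∣ g i) : q ^ (∑ i, m i - n.choose 2) ∣ Wr g := by
  rw [wronskian_eq_det, Matrix.det_apply]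
  refine Finset.dvd_sum fun σ _ => ?_
  have hterm : q ^ ∑ i, (m (σ i) - i) ∣ ∏ i, wronskianMatrix g (σ i) i := by
    rw [← Finset.prod_pow_eq_pow_sum]
    exact Finset.prod_dvd_prod_of_dvd _ _ fun i _ =>
      pow_sub_dvd_iterate_derivative_of_pow_dvd _ (hm (σ i))
  have hle : ∑ i, m i - n.choose 2 ≤ ∑ i : Fin n, (m (σ i) - i) := by
    have h : ∑ i : Fin n, m (σ i) ≤ ∑ i : Fin n, ((m (σ i) - i) + (i : ℕ)) :=
      Finset.sum_le_sum fun i _ => by omega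
    rw [Finset.sum_add_distrib, Fin.sum_univ_eq_sum_range (fun i => i), Finset.sum_range_id,
      ← Nat.choose_two_right, Equiv.sum_comp σ m] at h
    omega
  rw [Units.smul_def, zsmul_eq_mul]
  exact ((pow_dvd_pow q hle).trans hterm).mul_left _

theorem sum_rootMultiplicity_le (z : ℂ) {g : Fin n → ℂ[X]} (hg : Wr g ≠ 0) :
    ∑ i, rootMultiplicity z (g i) ≤ rootMultiplicity z (Wr g) + n.choose 2 := by
  have := (le_rootMultiplicity_iff hg).2
    (pow_dvd_wronskian _ fun i => pow_rootMultiplicity_dvd (g i) z)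
  omega

theorem wronskian_update_smul_sub_smul (g : Fin n → ℂ[X]) {i j : Fin n} (hij : i ≠ j)
    (a b : ℂ) :
    Wr (Function.update g j (a • g j - b • g i)) = C a * Wr g := by
  set M := wronskianMatrix g
  have hM : wronskianMatrix (Function.update g j (a • g j - b • g i)) =
      M.updateRow j (C a • M j + (-C b) • M i) := by
    ext r k
    by_cases hr : r = j
    · subst hr
      simp [M, wronskianMatrix, smul_eq_C_mul, sub_eq_add_neg]
    · simp [M, wronskianMatrix, hr]
  rw [wronskian_eq_det, wronskian_eq_det, hM, Matrix.det_updateRow_add, Matrix.det_updateRow_smul,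
    Matrix.det_updateRow_smul, Matrix.updateRow_eq_self, Matrix.det_updateRow_eq_zero hij, mul_zero,
    add_zero]

theorem eval_wronskian_ne_zero (z : ℂ) {g : Fin n → ℂ[X]} (hg : ∀ i, g i ≠ 0)
    (hinj : Function.Injective fun i => rootMultiplicity z (g i))
    (hlt : ∀ i, rootMultiplicity z (g i) < n) : (Wr g).eval z ≠ 0 := by
  -- reorder the rows by order of vanishing: the evaluated matrix becomes upper triangular
  let σ : Fin n ≃ Fin n := Equiv.ofBijective (fun i => ⟨_, hlt i⟩)
    (Finite.injective_iff_bijective.1 fun i i' h => hinj (Fin.val_eq_of_eq h))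
  have hσ : ∀ k, rootMultiplicity z (g (σ.symm k)) = k := fun k =>
    congrArg Fin.val (σ.apply_symm_apply k)
  set M := (wronskianMatrix g).map (eval z)
  have hup : (M.submatrix σ.symm id).IsUpperTriangular := fun k l hlk =>
    isRoot_iterate_derivative_of_lt_rootMultiplicity (by rw [hσ]; exact hlk)
  have hM : (Wr g).eval z = M.det := RingHom.map_det (evalRingHom z) _
  have hdiag : ∏ k, M.submatrix σ.symm id k k ≠ 0 := Finset.prod_ne_zero_iff.2 fun k _ => by
    simpa [M, wronskianMatrix, hσ] using
      eval_iterate_derivative_rootMultiplicity_ne_zero (hg (σ.symm k)) z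
  rw [hM]
  intro h0
  apply hdiag
  rw [← Matrix.det_of_isUpperTriangular hup, Matrix.det_permute, h0, mul_zero]

theorem exists_wronskian_update_eq_C_mul (z : ℂ) {g : Fin n → ℂ[X]} (hg : Wr g ≠ 0)
    {i j : Fin n} (hij : i ≠ j) (hm : rootMultiplicity z (g i) = rootMultiplicity z (g j)) :
    ∃ a b : ℂ, a ≠ 0 ∧
      Wr (Function.update g j (a • g j - b • g i)) = C a * Wr g ∧
      rootMultiplicity z (g j) < rootMultiplicity z (a • g j - b • g i) := by
  set m := rootMultiplicity z (g j)
  set a := eval z (g i /ₘ (X - C z) ^ m)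
  set b := eval z (g j /ₘ (X - C z) ^ m)
  have ha : a ≠ 0 := by
    simpa [a, ← hm] using eval_divByMonic_pow_rootMultiplicity_ne_zero z
      (ne_zero_of_wronskian_ne_zero hg i)
  have hW := wronskian_update_smul_sub_smul g hij a b
  have hw : a • g j - b • g i ≠ 0 := by
    have := ne_zero_of_wronskian_ne_zero (hW ▸ mul_ne_zero (C_ne_zero.2 ha) hg) j
    rwa [Function.update_self] at this
  refine ⟨a, b, ha, hW, (le_rootMultiplicity_iff hw).2 (pow_succ_dvd_smul_sub_smul z ?_ ?_)⟩
  · exact (pow_mul_divByMonic_rootMultiplicity_eq (g j) z).symm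
  · rw [← hm]
    exact (pow_mul_divByMonic_rootMultiplicity_eq (g i) z).symm

theorem exists_injective_rootMultiplicity (z : ℂ) (V : Submodule ℂ ℂ[X])
    (g : Fin n → ℂ[X]) (hg : Wr g ≠ 0) (hgV : ∀ i, g i ∈ V) :
    ∃ g' : Fin n → ℂ[X], (∀ i, g' i ∈ V) ∧ (∃ c ≠ 0, Wr g' = C c * Wr g) ∧
      Function.Injective fun i => rootMultiplicity z (g' i) := by
  -- each step raises the total order of vanishing, which `sum_rootMultiplicity_le` bounds
  induction hk : rootMultiplicity z (Wr g) + n.choose 2 - ∑ i, rootMultiplicity z (g i)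
    using Nat.strong_induction_on generalizing g with
  | _ k ih =>
  by_cases hinj : Function.Injective fun i => rootMultiplicity z (g i)
  · exact ⟨g, hgV, ⟨1, one_ne_zero, by simp⟩, hinj⟩
  obtain ⟨i, j, hm, hij⟩ := Function.not_injective_iff.1 hinj
  obtain ⟨a, b, ha, hW, hlt⟩ := exists_wronskian_update_eq_C_mul z hg hij hm
  set g₁ := Function.update g j (a • g j - b • g i)
  have hg₁ : Wr g₁ ≠ 0 := hW ▸ mul_ne_zero (C_ne_zero.2 ha) hg
  have hg₁V : ∀ r, g₁ r ∈ V := fun r => by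
    rcases eq_or_ne r j with rfl | hr
    · simpa [g₁] using V.sub_mem (V.smul_mem a (hgV r)) (V.smul_mem b (hgV i))
    · simpa [g₁, hr] using hgV r
  have hord : rootMultiplicity z (Wr g₁) = rootMultiplicity z (Wr g) := by
    rw [hW, rootMultiplicity_C_mul z ha]
  have hsum : ∑ r, rootMultiplicity z (g r) < ∑ r, rootMultiplicity z (g₁ r) := by
    refine Finset.sum_lt_sum (fun r _ => ?_) ⟨j, Finset.mem_univ _, by simpa [g₁] using hlt⟩
    rcases eq_or_ne r j with rfl | hr
    · simpa [g₁] using hlt.le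
    · simp [g₁, hr]
  have hbound := sum_rootMultiplicity_le z hg₁
  obtain ⟨g', hg'V, ⟨c, hc, hWg'⟩, hinj'⟩ := ih _ (by omega) g₁ hg₁ hg₁V rfl
  exact ⟨g', hg'V, ⟨c * a, mul_ne_zero hc ha, by rw [hWg', hW, C_mul, mul_assoc]⟩, hinj'⟩

theorem image_rootMultiplicity_eq_erase_range (z : ℂ) {g : Fin n → ℂ[X]} (hg : Wr g ≠ 0)
    (hinj : Function.Injective fun i => rootMultiplicity z (g i)) (hroot : (Wr g).IsRoot z)
    (hsimple : rootMultiplicity z (Wr g) ≤ 1) :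
    Finset.univ.image (fun i => rootMultiplicity z (g i)) =
      (Finset.range (n + 1)).erase (n - 1) := by
  set T := Finset.univ.image fun i => rootMultiplicity z (g i)
  have hT : T.card = n := by simpa using Finset.card_image_of_injective Finset.univ hinj
  have hTsum : ∑ m ∈ T, m = ∑ i, rootMultiplicity z (g i) :=
    Finset.sum_image fun i _ j _ h => hinj h
  have hle := sum_rootMultiplicity_le z hg
  have hge := T.choose_two_card_le_sum
  have hne : ∑ m ∈ T, m ≠ T.card.choose 2 := fun h => by
    have hTr := Finset.eq_range_of_sum_eq_choose_two h
    refine eval_wronskian_ne_zero z (ne_zero_of_wronskian_ne_zero hg) hinj (fun i => ?_) hroot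
    have : rootMultiplicity z (g i) ∈ T := Finset.mem_image_of_mem _ (Finset.mem_univ i)
    rwa [hTr, hT, Finset.mem_range] at this
  rw [hT] at hne hge
  have hsum : ∑ m ∈ T, m = T.card.choose 2 + 1 := by rw [hT]; omega
  rw [Finset.eq_erase_of_sum_eq_choose_two_add_one hsum, hT]

end Wronskian

theorem statement13_general (N : ℕ) (hN : 1 ≤ N) (lam : Fin N → ℕ)
    (X : Submodule ℂ (Polynomial ℂ)) (hX : X ∈ Omega N lam)
    (f : Fin N → Polynomial ℂ) (hf : IsFlagBasis N lam X f)
    (y : ℕ → Polynomial ℂ)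
    (hy : ∀ a < N, (y a).Monic ∧ ∃ c : ℂ, c ≠ 0 ∧ wrTail f a = Polynomial.C c * y a)
    (hsq : ∀ a < N, Squarefree (y a))
    (z : ℂ) (hz : (y 0).IsRoot z) :
    ∀ m : ℕ, (∃ g ∈ X, g ≠ 0 ∧ Polynomial.rootMultiplicity z g = m) ↔
      (m + 2 ≤ N ∨ m = N) := by
  obtain ⟨-, c₀, hc₀, hWf⟩ := hy 0 hN
  rw [wrTail_zero] at hWf
  have hfX : ∀ i, f i ∈ X := fun i => hf.2.1 ▸ Submodule.subset_span ⟨i, rfl⟩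
  obtain ⟨g, hgX, ⟨c, hc, hWg⟩, hinj⟩ := exists_injective_rootMultiplicity z X f
    (hWf ▸ mul_ne_zero (C_ne_zero.2 hc₀) (hsq 0 hN).ne_zero) hfX
  rw [hWf, ← mul_assoc, ← C_mul] at hWg
  have hWg0 : Wr g ≠ 0 :=
    hWg ▸ mul_ne_zero (C_ne_zero.2 (mul_ne_zero hc hc₀)) (hsq 0 hN).ne_zero
  have hsimple : rootMultiplicity z (Wr g) ≤ 1 := by
    rw [hWg, rootMultiplicity_C_mul z (mul_ne_zero hc hc₀)]
    exact rootMultiplicity_le_one_of_squarefree (hsq 0 hN) z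
  have : FiniteDimensional ℂ X := Module.finite_of_finrank_pos (hX.1 ▸ hN)
  intro m
  rw [exists_rootMultiplicity_eq_iff_mem_image z X hX.1 g hgX (ne_zero_of_wronskian_ne_zero hWg0)
      hinj, image_rootMultiplicity_eq_erase_range z hWg0 hinj (by simp [hWg, hz.eq_zero]) hsimple,
    Finset.mem_erase, Finset.mem_range]
  omega

/-- let `X ∈ Ω_λ` be generic (each `y_a`, the monic polynomial
proportional to the tail Wronskian of the flag basis, is squarefree, and consecutive
`y`'s are coprime) and let `z` be a root of `y_0`. Then the orders of vanishing at `z`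
of nonzero elements of `X` are exactly `{0, 1, …, N−2, N}` — i.e. the exponents of
`D_X` at `z` are `0, 1, …, N−2, N`. -/
theorem statement13 (N : ℕ) (hN : 1 ≤ N) (lam : Fin N → ℕ) (hlam : Antitone lam)
    (X : Submodule ℂ (Polynomial ℂ)) (hX : X ∈ Omega N lam)
    (f : Fin N → Polynomial ℂ) (hf : IsFlagBasis N lam X f)
    (y : ℕ → Polynomial ℂ)
    (hy : ∀ a < N, (y a).Monic ∧ ∃ c : ℂ, c ≠ 0 ∧ wrTail f a = Polynomial.C c * y a)
    (hsq : ∀ a < N, Squarefree (y a))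
    (hcop : ∀ a : ℕ, 1 ≤ a → a < N → IsCoprime (y (a - 1)) (y a))
    (z : ℂ) (hz : (y 0).IsRoot z) :
    ∀ m : ℕ, (∃ g ∈ X, g ≠ 0 ∧ Polynomial.rootMultiplicity z g = m) ↔
      (m + 2 ≤ N ∨ m = N) :=
  statement13_general N hN lam X hX f hf y hy hsq z hz
end
end
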